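/- arXiv:2203.03612 — 11 statements merged into one kernel-verified Lean document; each statement's English description precedes it below -/
import Mathlib

section
/- Let S be a B₃-set of integers with difference set D = {s - s' : s, s' ∈ S, s' < s}. If d₁ and d₂ are (not necessarily distinct) elements of D such that d₁ + d₂ ∈ D, then there exist b₁ < b₂ < b₃ in S with {b₂ - b₁, b₃ - b₂} = {d₁, d₂}. -/
/-- A set of integers is a `B₃`-set if all sums of three (not necessarily distinct)
elements, taken in nondecreasing order, are pairwise distinct. -/
def IsB3Set (S : Set ℤ) : Prop :=
  ∀ a₁ a₂ a₃ b₁ b₂ b₃ : ℤ, a₁ ∈ S → a₂ ∈ S → a₃ ∈ S → b₁ ∈ S → b₂ ∈ S → b₃ ∈ S →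
    a₁ ≤ a₂ → a₂ ≤ a₃ → b₁ ≤ b₂ → b₂ ≤ b₃ →
    a₁ + a₂ + a₃ = b₁ + b₂ + b₃ → a₁ = b₁ ∧ a₂ = b₂ ∧ a₃ = b₃

/-- The difference set of a set of integers. -/
def diffSet (S : Set ℤ) : Set ℤ := {d : ℤ | ∃ s' s : ℤ, s' ∈ S ∧ s ∈ S ∧ s' < s ∧ d = s - s'}

lemma msw (a b : ℤ) : (a ::ₘ {b} : Multiset ℤ) = b ::ₘ {a} := by
  have := Multiset.cons_swap a b (0 : Multiset ℤ); simpa using this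

lemma e213 (a b c : ℤ) : ({b,a,c} : Multiset ℤ) = {a,b,c} := Multiset.cons_swap b a {c}
lemma e132 (a b c : ℤ) : ({a,c,b} : Multiset ℤ) = {a,b,c} := by
  show a ::ₘ (c ::ₘ {b}) = _; rw [msw c b]; rfl
lemma e312 (a b c : ℤ) : ({c,a,b} : Multiset ℤ) = {a,b,c} := by
  show c ::ₘ (a ::ₘ {b}) = _; rw [Multiset.cons_swap, msw c b]; rfl
lemma e231 (a b c : ℤ) : ({b,c,a} : Multiset ℤ) = {a,b,c} := by
  show b ::ₘ (c ::ₘ {a}) = _; rw [msw c a, Multiset.cons_swap]; rfl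
lemma e321 (a b c : ℤ) : ({c,b,a} : Multiset ℤ) = {a,b,c} := by
  show c ::ₘ (b ::ₘ {a}) = _; rw [msw b a, Multiset.cons_swap, msw c b]; rfl

lemma sort3 (a b c : ℤ) : ∃ p q r : ℤ, p ≤ q ∧ q ≤ r ∧ ({p,q,r} : Multiset ℤ) = {a,b,c} := by
  rcases le_total a b with h1 | h1 <;> rcases le_total b c with h2 | h2 <;>
    rcases le_total a c with h3 | h3
  all_goals first
    | exact ⟨a, b, c, by omega, by omega, rfl⟩
    | exact ⟨a, c, b, by omega, by omega, e132 a b c⟩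
    | exact ⟨b, a, c, by omega, by omega, e213 a b c⟩
    | exact ⟨b, c, a, by omega, by omega, e231 a b c⟩
    | exact ⟨c, a, b, by omega, by omega, e312 a b c⟩
    | exact ⟨c, b, a, by omega, by omega, e321 a b c⟩

lemma perm3 {a b c d e f : ℤ} (h : ({a,b,c} : Multiset ℤ) = {d,e,f}) :
    (a=d∧b=e∧c=f) ∨ (a=d∧b=f∧c=e) ∨ (a=e∧b=d∧c=f) ∨ (a=e∧b=f∧c=d) ∨
    (a=f∧b=d∧c=e) ∨ (a=f∧b=e∧c=d) := by
  simp only [Multiset.insert_eq_cons, Multiset.cons_eq_cons, Multiset.singleton_inj,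
    Multiset.singleton_eq_cons_iff] at h
  rcases h with ⟨h1, ⟨h2, h3⟩ | ⟨h2, cs, ⟨h3, h4⟩, h5, h6⟩⟩ | ⟨h1, cs, hL, hR⟩
  · exact Or.inl ⟨h1, h2, h3⟩
  · exact Or.inr (Or.inl ⟨h1, h5.symm, h3⟩)
  · rcases hL with ⟨h2, h3⟩ | ⟨h2, cs1, ⟨h3, h4⟩, h5⟩ <;>
      rcases hR with ⟨h6, h7⟩ | ⟨h6, cs2, ⟨h7, h8⟩, h9⟩
    · have hcf := Multiset.singleton_inj.mp (h3.trans h7.symm)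
      exact Or.inr (Or.inr (Or.inl ⟨h6.symm, h2, hcf⟩))
    · subst h8; rw [← h3] at h9
      simp only [Multiset.cons_zero, Multiset.singleton_inj] at h9
      exact Or.inr (Or.inr (Or.inr (Or.inr (Or.inl ⟨h7.symm, h2, h9⟩))))
    · subst h4; rw [h5] at h7
      simp only [Multiset.cons_zero, Multiset.singleton_inj] at h7
      exact Or.inr (Or.inr (Or.inr (Or.inl ⟨h6.symm, h7.symm, h3⟩)))
    · subst h4; subst h8; rw [h5] at h9
      simp only [Multiset.cons_zero, Multiset.singleton_inj] at h9
      exact Or.inr (Or.inr (Or.inr (Or.inr (Or.inr ⟨h7.symm, h9, h3⟩))))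

lemma memS {S : Set ℤ} {a b c x : ℤ} (ha : a ∈ S) (hb : b ∈ S) (hc : c ∈ S)
    (hx : x ∈ ({a,b,c} : Multiset ℤ)) : x ∈ S := by
  simp only [Multiset.insert_eq_cons, Multiset.mem_cons, Multiset.mem_singleton] at hx
  rcases hx with h | h | h <;> subst h <;> assumption

lemma key {S : Set ℤ} (hS : IsB3Set S) {a b c a' b' c' : ℤ}
    (ha : a ∈ S) (hb : b ∈ S) (hc : c ∈ S) (ha' : a' ∈ S) (hb' : b' ∈ S) (hc' : c' ∈ S)
    (hsum : a + b + c = a' + b' + c') :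
    ({a,b,c} : Multiset ℤ) = {a',b',c'} := by
  obtain ⟨p, q, r, hpq, hqr, hm⟩ := sort3 a b c
  obtain ⟨p', q', r', hpq', hqr', hm'⟩ := sort3 a' b' c'
  have s1 : p + q + r = a + b + c := by
    have := congrArg Multiset.sum hm
    simp only [Multiset.insert_eq_cons, Multiset.sum_cons, Multiset.sum_singleton] at this
    omega
  have s2 : p' + q' + r' = a' + b' + c' := by
    have := congrArg Multiset.sum hm'
    simp only [Multiset.insert_eq_cons, Multiset.sum_cons, Multiset.sum_singleton] at this
    omega
  have hp : p ∈ S := memS ha hb hc (hm ▸ (by simp))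
  have hq : q ∈ S := memS ha hb hc (hm ▸ (by simp))
  have hr : r ∈ S := memS ha hb hc (hm ▸ (by simp))
  have hp' : p' ∈ S := memS ha' hb' hc' (hm' ▸ (by simp))
  have hq' : q' ∈ S := memS ha' hb' hc' (hm' ▸ (by simp))
  have hr' : r' ∈ S := memS ha' hb' hc' (hm' ▸ (by simp))
  obtain ⟨e1, e2, e3⟩ := hS p q r p' q' r' hp hq hr hp' hq' hr' hpq hqr hpq' hqr' (by omega)
  rw [← hm, ← hm', e1, e2, e3]

/-- **Triangle fact.** If `S` is a `B₃`-set with difference set `D`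
and `d₁, d₂ ∈ D` with `d₁ + d₂ ∈ D`, then there are `b₁ < b₂ < b₃` in `S` with
`{b₂ - b₁, b₃ - b₂} = {d₁, d₂}`. -/
theorem stmt_1 (S : Set ℤ) (hS : IsB3Set S) (d₁ d₂ : ℤ)
    (h₁ : d₁ ∈ diffSet S) (h₂ : d₂ ∈ diffSet S) (h₁₂ : d₁ + d₂ ∈ diffSet S) :
    ∃ b₁ b₂ b₃ : ℤ, b₁ ∈ S ∧ b₂ ∈ S ∧ b₃ ∈ S ∧ b₁ < b₂ ∧ b₂ < b₃ ∧
      ({b₂ - b₁, b₃ - b₂} : Set ℤ) = {d₁, d₂} := by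
  obtain ⟨x₁, x₂, hx₁, hx₂, hxlt, hd₁⟩ := h₁
  obtain ⟨y₁, y₂, hy₁, hy₂, hylt, hd₂⟩ := h₂
  obtain ⟨z₁, z₂, hz₁, hz₂, hzlt, hd₁₂⟩ := h₁₂
  have hsum : x₁ + y₁ + z₂ = x₂ + y₂ + z₁ := by omega
  have M := key hS hx₁ hy₁ hz₂ hx₂ hy₂ hz₁ hsum
  rcases perm3 M with ⟨e1,e2,e3⟩ | ⟨e1,e2,e3⟩ | ⟨e1,e2,e3⟩ | ⟨e1,e2,e3⟩ | ⟨e1,e2,e3⟩ | ⟨e1,e2,e3⟩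
  · omega
  · omega
  · omega
  · -- x₁ = y₂, y₁ = z₁, z₂ = x₂ : take y₁ < x₁ < x₂
    refine ⟨y₁, x₁, x₂, hy₁, hx₁, hx₂, by omega, hxlt, ?_⟩
    rw [show x₁ - y₁ = d₂ by omega, show x₂ - x₁ = d₁ by omega]
    exact Set.pair_comm d₂ d₁
  · -- x₁ = z₁, y₁ = x₂, z₂ = y₂ : take x₁ < x₂ < y₂
    refine ⟨x₁, x₂, y₂, hx₁, hx₂, hy₂, hxlt, by omega, ?_⟩
    rw [show x₂ - x₁ = d₁ by omega, show y₂ - x₂ = d₂ by omega]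
  · omega
end

section
/- Let (a₁, a₂, …, a_k) be a finite sequence of distinct elements of a set equipped with a strict total order <. If the sequence has no decreasing subsequence (with respect to <) of length greater than m, then the sequence can be partitioned into at most m increasing subsequences. -/
noncomputable def ddAux {α : Type*} [LinearOrder α] {k : ℕ} (a : Fin k → α) : Fin k → ℕ :=
  fun i =>
    1 + ((Finset.univ.filter fun j => i < j ∧ a j < a i).attach.sup fun j => ddAux a j.1)
termination_by i => k - i.val
decreasing_by
  have hj := (Finset.mem_filter.mp j.2).2.1
  simp only [Fin.lt_def] at hj
  have := j.1.isLt
  omega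

lemma ddAux_eq {α : Type*} [LinearOrder α] {k : ℕ} (a : Fin k → α) (i : Fin k) :
    ddAux a i = 1 + ((Finset.univ.filter fun j => i < j ∧ a j < a i).attach.sup fun j => ddAux a j.1) := by
  rw [ddAux]

lemma ddAux_pos {α : Type*} [LinearOrder α] {k : ℕ} (a : Fin k → α) (i : Fin k) :
    1 ≤ ddAux a i := by
  rw [ddAux_eq]; omega

lemma ddAux_lt {α : Type*} [LinearOrder α] {k : ℕ} (a : Fin k → α) {i j : Fin k}
    (hij : i < j) (ha : a j < a i) : ddAux a j < ddAux a i := by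
  have hmem : j ∈ Finset.univ.filter fun j' => i < j' ∧ a j' < a i := by
    simp [hij, ha]
  have hle : ddAux a j ≤ (Finset.univ.filter fun j' => i < j' ∧ a j' < a i).attach.sup
      fun j' => ddAux a j'.1 := by
    exact Finset.le_sup (f := fun j' => ddAux a j'.1) (Finset.mem_attach _ ⟨j, hmem⟩)
  rw [ddAux_eq a i]; omega

lemma ddAux_chain {α : Type*} [LinearOrder α] {k : ℕ} (a : Fin k → α) :
    ∀ N (i : Fin k) n, k - i.val ≤ N → n ≤ ddAux a i →
      ∃ t : Fin n → Fin k, StrictMono t ∧ StrictAnti (a ∘ t) ∧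
        (∀ s, i ≤ t s) ∧ (∀ s, a (t s) ≤ a i) := by
  intro N
  induction N with
  | zero => intro i n h1 _; exact absurd h1 (by have := i.isLt; omega)
  | succ N ih =>
    intro i n hN hn
    match n with
    | 0 => exact ⟨Fin.elim0, fun p => p.elim0, fun p => p.elim0, fun p => p.elim0, fun p => p.elim0⟩
    | 1 =>
      refine ⟨fun _ => i, ?_, ?_, fun _ => le_refl _, fun _ => le_refl _⟩
      · intro p q hpq; exact absurd hpq (by omega)
      · intro p q hpq; exact absurd hpq (by omega)
    | (s+2) =>
      rw [ddAux_eq] at hn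
      set S := (Finset.univ.filter fun j => i < j ∧ a j < a i) with hS
      have hsup : s + 1 ≤ S.attach.sup fun j => ddAux a j.1 := by omega
      have hne : S.attach.Nonempty := by
        by_contra h
        rw [Finset.not_nonempty_iff_eq_empty] at h
        rw [h] at hsup; simp at hsup
      obtain ⟨⟨j, hjS⟩, _, hj⟩ := Finset.exists_mem_eq_sup S.attach hne fun j => ddAux a j.1
      obtain ⟨hij, haji⟩ := (Finset.mem_filter.mp hjS).2
      have hdj : s + 1 ≤ ddAux a j := by rw [hj] at hsup; exact hsup
      have hNj : k - j.val ≤ N := by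
        have h1 : i.val < j.val := hij
        have h2 : j.val < k := j.isLt
        omega
      obtain ⟨t', hmono, hanti, hge, hle⟩ := ih j (s+1) hNj hdj
      refine ⟨Fin.cons i t', ?_, ?_, ?_, ?_⟩
      · intro p q hpq
        induction q using Fin.cases with
        | zero => exact absurd hpq (by simp [Fin.lt_def])
        | succ q' =>
          induction p using Fin.cases with
          | zero =>
            simp only [Fin.cons_zero, Fin.cons_succ]
            exact lt_of_lt_of_le hij (hge q')
          | succ p' =>
            simp only [Fin.cons_succ]
            exact hmono (by rwa [Fin.succ_lt_succ_iff] at hpq)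
      · intro p q hpq
        induction q using Fin.cases with
        | zero => exact absurd hpq (by simp [Fin.lt_def])
        | succ q' =>
          induction p using Fin.cases with
          | zero =>
            simp only [Function.comp, Fin.cons_zero, Fin.cons_succ]
            exact lt_of_le_of_lt (hle q') haji
          | succ p' =>
            simp only [Function.comp, Fin.cons_succ]
            exact hanti (by rwa [Fin.succ_lt_succ_iff] at hpq)
      · intro p
        induction p using Fin.cases with
        | zero => simp
        | succ p' => simpa using le_of_lt (lt_of_lt_of_le hij (hge p'))
      · intro p
        induction p using Fin.cases with
        | zero => simp
        | succ p' => simpa using le_of_lt (lt_of_le_of_lt (hle p') haji)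

/-- **corollary of Dilworth/Mirsky.** If a finite sequence
`a : Fin k → α` of distinct elements of a linearly ordered set has no strictly
decreasing subsequence with more than `m` terms, then its index set can be
partitioned into at most `m` classes on each of which the sequence is strictly
increasing. -/
theorem stmt_5 {α : Type*} [LinearOrder α] (k m : ℕ) (a : Fin k → α)
    (hinj : Function.Injective a)
    (hdec : ¬ ∃ t : Fin (m + 1) → Fin k, StrictMono t ∧ StrictAnti (a ∘ t)) :
    ∃ f : Fin k → Fin m, ∀ i j : Fin k, f i = f j → i < j → a i < a j := by
  rcases Nat.eq_zero_or_pos k with hk | hk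
  · subst hk
    exact ⟨fun i => i.elim0, fun i => i.elim0⟩
  · have hm : 0 < m := by
      by_contra h
      push_neg at h
      interval_cases m
      exact hdec ⟨fun _ => ⟨0, hk⟩, fun p q hpq => absurd hpq (by omega),
        fun p q hpq => absurd hpq (by omega)⟩
    have hdle : ∀ i, ddAux a i ≤ m := by
      intro i
      by_contra h
      push_neg at h
      obtain ⟨t, hmono, hanti, _, _⟩ := ddAux_chain a k i (m+1) (by omega) h
      exact hdec ⟨t, hmono, hanti⟩
    refine ⟨fun i => ⟨ddAux a i - 1, by have := ddAux_pos a i; have := hdle i; omega⟩, ?_⟩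
    intro i j hf hij
    have hd : ddAux a i = ddAux a j := by
      have := ddAux_pos a i; have := ddAux_pos a j
      have := Fin.mk.injEq .. ▸ hf
      omega
    by_contra h
    push_neg at h
    have hne : a i ≠ a j := fun he => (hij.ne (hinj he))
    have : a j < a i := lt_of_le_of_ne h (Ne.symm hne)
    exact absurd hd (ddAux_lt a hij this).ne'
end

section
/- Let S be a tournament on a linearly ordered vertex set, let L be its back-edge graph (edges are pairs x < y with the tournament edge directed from y to x), and suppose L has clique number at most ω and chromatic number at least n. Then the chromatic number of the tournament S is at least n/ω. -/
/-- Let `T` be a tournament on a finite linearly ordered vertex set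
`V` (an irreflexive relation such that for distinct `u, v` exactly one of `T u v`,
`T v u` holds). Let `L` be its back-edge graph: `x` and `y` with `x < y` are adjacent
iff the tournament edge goes from `y` to `x`. If `L` has no clique on `ω + 1` vertices
and chromatic number at least `n`, then every partition of `V` into `k` classes each
inducing a transitive subtournament satisfies `n ≤ k * ω`; that is, the chromatic
number of the tournament is at least `n / ω`. -/
theorem stmt_6 {V : Type*} [Fintype V] [LinearOrder V] (T : V → V → Prop)
    (hirr : ∀ v, ¬ T v v) (htotal : ∀ u v : V, u ≠ v → (T u v ↔ ¬ T v u))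
    (ω n : ℕ)
    (hclique : (SimpleGraph.fromRel (fun x y => x < y ∧ T y x)).CliqueFree (ω + 1))
    (hchrom : (n : ℕ∞) ≤ (SimpleGraph.fromRel (fun x y => x < y ∧ T y x)).chromaticNumber)
    (k : ℕ) (c : V → Fin k)
    (htrans : ∀ u v w : V, c u = c v → c v = c w → T u v → T v w → T u w) :
    n ≤ k * ω := by
  classical
  set L := SimpleGraph.fromRel (fun x y : V => x < y ∧ T y x) with hLdef
  -- a clique in L has at most ω vertices
  have hcard : ∀ s : Finset V, L.IsClique s → s.card ≤ ω := by
    intro s hs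
    by_contra hlt
    push_neg at hlt
    obtain ⟨t, hts, htcard⟩ := Finset.exists_subset_card_eq hlt
    exact hclique t ⟨hs.subset hts, htcard⟩
  -- case ω = 0 : V is empty
  rcases Nat.eq_zero_or_pos ω with hω0 | hω1
  · subst hω0
    have hemp : IsEmpty V := by
      by_contra h
      rw [not_isEmpty_iff] at h
      obtain ⟨v⟩ := h
      have : ({v} : Finset V).card ≤ 0 := hcard {v} (by simp [SimpleGraph.IsClique])
      simp at this
    have h0 : L.chromaticNumber = 0 := L.chromaticNumber_eq_zero_of_isEmpty
    rw [h0] at hchrom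
    have : n = 0 := by exact_mod_cast le_antisymm (by exact_mod_cast hchrom) (Nat.zero_le n)
    simp [this]
  -- the strict partial order of back-edges within a color class
  set prec : V → V → Prop := fun u v => c u = c v ∧ u < v ∧ T v u with hprec
  have prec_trans : ∀ {x y z : V}, prec x y → prec y z → prec x z := by
    rintro x y z ⟨h1, h2, h3⟩ ⟨h4, h5, h6⟩
    exact ⟨h1.trans h4, h2.trans h5, htrans z y x h4.symm h1.symm h6 h3⟩
  have prec_adj : ∀ {x y : V}, prec x y → L.Adj x y := by
    rintro x y ⟨h1, h2, h3⟩
    exact ⟨ne_of_lt h2, Or.inl ⟨h2, h3⟩⟩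
  -- chains ending at v
  set ch : V → Finset V → Prop := fun v s =>
    v ∈ s ∧ (∀ x ∈ s, x = v ∨ prec x v) ∧
      (∀ x ∈ s, ∀ y ∈ s, x ≠ y → prec x y ∨ prec y x) with hch
  have chain_clique : ∀ v s, ch v s → L.IsClique s := by
    rintro v s ⟨-, -, h⟩ x hx y hy hxy
    rcases h x hx y hy hxy with h' | h'
    · exact prec_adj h'
    · exact (prec_adj h').symm
  -- height function
  set h : V → ℕ :=
    fun v => Finset.univ.sup (fun s : Finset V => if ch v s then s.card else 0) with hh
  have h_le : ∀ v, h v ≤ ω := by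
    intro v
    apply Finset.sup_le
    intro s _
    split_ifs with hs
    · exact hcard s (chain_clique v s hs)
    · exact Nat.zero_le ω
  have h_ge : ∀ v, 1 ≤ h v := by
    intro v
    have hchv : ch v ({v} : Finset V) := by
      refine ⟨Finset.mem_singleton_self v, ?_, ?_⟩ <;> simp
    have := Finset.le_sup (f := fun s : Finset V => if ch v s then s.card else 0)
      (Finset.mem_univ ({v} : Finset V))
    beta_reduce at this
    rw [if_pos hchv] at this
    rw [hh]
    simpa using this
  -- monotonicity of height along prec
  have h_mono : ∀ {u v : V}, prec u v → h u < h v := by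
    intro u v huv
    rw [hh]
    apply Finset.sup_lt_iff (lt_of_lt_of_le Nat.zero_lt_one (h_ge v)) |>.2
    intro s _
    split_ifs with hs
    · -- insert v s is a chain ending at v
      obtain ⟨hus, hmax, hpair⟩ := hs
      have hvs : v ∉ s := by
        intro hvmem
        rcases hmax v hvmem with heq | hp
        · subst heq; exact lt_irrefl v huv.2.1
        · exact absurd huv.2.1 (asymm hp.2.1)
      have hallv : ∀ x ∈ s, prec x v := by
        intro x hx
        rcases hmax x hx with rfl | hp
        · exact huv
        · exact prec_trans hp huv
      have hchv : ch v (insert v s) := by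
        refine ⟨Finset.mem_insert_self v s, ?_, ?_⟩
        · intro x hx
          rcases Finset.mem_insert.1 hx with rfl | hx'
          · exact Or.inl rfl
          · exact Or.inr (hallv x hx')
        · intro x hx y hy hxy
          rcases Finset.mem_insert.1 hx with rfl | hx' <;>
            rcases Finset.mem_insert.1 hy with rfl | hy'
          · exact absurd rfl hxy
          · exact Or.inr (hallv y hy')
          · exact Or.inl (hallv x hx')
          · exact hpair x hx' y hy' hxy
      have hle : (insert v s).card ≤ h v := by
        have := Finset.le_sup (f := fun s : Finset V => if ch v s then s.card else 0)
          (Finset.mem_univ (insert v s))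
        beta_reduce at this
        rw [if_pos hchv] at this
        rw [hh]
        exact this
      have : s.card + 1 ≤ h v := by
        rwa [Finset.card_insert_of_notMem hvs] at hle
      omega
    · exact lt_of_lt_of_le Nat.zero_lt_one (h_ge v)
  -- build a coloring with k * ω colors
  have hωpos : 0 < ω := hω1
  let C : L.Coloring (Fin k × Fin ω) :=
    SimpleGraph.Coloring.mk
      (fun v => (c v, ⟨h v - 1, by have := h_le v; have := h_ge v; omega⟩))
      (by
        intro u v huv
        intro heq
        have hc : c u = c v := congrArg Prod.fst heq
        have hne : h u - 1 = h v - 1 := by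
          have := congrArg Prod.snd heq
          simpa using congrArg Fin.val this
        have hhuv : h u = h v := by
          have := h_ge u; have := h_ge v; omega
        obtain ⟨hne', hrel⟩ := huv
        rcases hrel with ⟨h1, h2⟩ | ⟨h1, h2⟩
        · exact absurd hhuv (Nat.ne_of_lt (h_mono ⟨hc, h1, h2⟩))
        · exact absurd hhuv.symm (Nat.ne_of_lt (h_mono ⟨hc.symm, h1, h2⟩)))
  have hcol : L.Colorable (k * ω) := by
    have := C.colorable
    simpa [Fintype.card_prod] using this
  have hle : L.chromaticNumber ≤ (k * ω : ℕ) := hcol.chromaticNumber_le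
  exact_mod_cast le_trans hchrom hle
end

section
/- In the Zykov digraph Z⃗ₙ (defined inductively: Z⃗₁ is a single vertex; Z⃗_{n+1} takes n disjoint copies of Z⃗ₙ and for each transversal tuple adds a new sink vertex receiving an edge from each coordinate), for every ordered pair of vertices (u, v) there is at most one directed path from u to v. -/
/-- Vertex set of the Zykov digraph: `ZykV n` is the vertex set of `Z⃗_{n+1}`.
`Z⃗₁` is a single vertex, and `Z⃗_{k+2}` consists of `k+1` disjoint copies of
`Z⃗_{k+1}` together with one new vertex for each transversal tuple. -/
def ZykV : ℕ → Type
  | 0 => PUnit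
  | k + 1 => ((Fin (k + 1)) × ZykV k) ⊕ ((i : Fin (k + 1)) → ZykV k)

/-- The directed edge (arc) relation of the Zykov digraph `Z⃗_{n+1}` on `ZykV n`:
arcs inside each copy are inherited, and each transversal tuple vertex receives an
arc from each of its coordinates. -/
def ZykArc : (n : ℕ) → ZykV n → ZykV n → Prop
  | 0, _, _ => False
  | k + 1, Sum.inl ⟨i, u⟩, Sum.inl ⟨j, v⟩ => i = j ∧ ZykArc k u v
  | k + 1, Sum.inl ⟨i, u⟩, Sum.inr f => f i = u
  | k + 1, _, _ => False

lemma zyk_no_arc_zero (a b : ZykV 0) : ¬ ZykArc 0 a b := fun h => h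

lemma zyk_no_out_inr {k : ℕ} (f : (i : Fin (k+1)) → ZykV k) (w : ZykV (k+1)) :
    ¬ ZykArc (k+1) (Sum.inr f) w := by
  rcases w with ⟨i, u⟩ | g <;> exact fun h => h

lemma zyk_arc_inl_inl {k : ℕ} {i j : Fin (k+1)} {a b : ZykV k} :
    ZykArc (k+1) (Sum.inl (i, a)) (Sum.inl (j, b)) ↔ i = j ∧ ZykArc k a b := Iff.rfl

lemma zyk_arc_inl_inr {k : ℕ} {i : Fin (k+1)} {a : ZykV k} {f : (j : Fin (k+1)) → ZykV k} :
    ZykArc (k+1) (Sum.inl (i, a)) (Sum.inr f) ↔ f i = a := Iff.rfl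

/-- If a chain starts at a sink vertex `Sum.inr g`, it is a singleton. -/
lemma zyk_singleton_of_inr_head {k : ℕ} (l : List (ZykV (k+1)))
    (hc : l.Chain' (ZykArc (k+1))) (g : (i : Fin (k+1)) → ZykV k)
    (hh : l.head? = some (Sum.inr g)) : l = [Sum.inr g] := by
  match l with
  | [] => simp at hh
  | [a] => exact congrArg (· :: []) (Option.some.inj hh)
  | a :: b :: r =>
    simp only [List.head?] at hh
    obtain rfl : a = Sum.inr g := by injection hh
    replace hc := List.isChain_cons_cons.mp hc
    exact absurd hc.1 (zyk_no_out_inr g b)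

/-- Decomposition of a chain starting inside copy `i`. -/
lemma zyk_decomp {k : ℕ} :
    ∀ (l : List (ZykV (k+1))), l.Chain' (ZykArc (k+1)) →
    ∀ (i : Fin (k+1)) (u' : ZykV k), l.head? = some (Sum.inl (i, u')) →
    (∃ l' : List (ZykV k), l'.head? = some u' ∧
        l = l'.map (fun w => Sum.inl (i, w))) ∨
    (∃ (l' : List (ZykV k)) (f : (j : Fin (k+1)) → ZykV k), l'.head? = some u' ∧
        l = l'.map (fun w => Sum.inl (i, w)) ++ [Sum.inr f]) := by
  intro l
  induction l with
  | nil => intro _ i u' hh; simp at hh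
  | cons x rest ih =>
    intro hc i u' hh
    simp only [List.head?] at hh
    obtain rfl : x = Sum.inl (i, u') := by injection hh
    match rest with
    | [] => exact Or.inl ⟨[u'], rfl, rfl⟩
    | y :: rest' =>
      replace hc := List.isChain_cons_cons.mp hc
      obtain ⟨harc, hc'⟩ := hc
      rcases y with ⟨j, w⟩ | g
      · obtain ⟨rfl, -⟩ := zyk_arc_inl_inl.mp harc
        rcases ih hc' i w rfl with ⟨l', hh', hl'⟩ | ⟨l', f, hh', hl'⟩
        · exact Or.inl ⟨u' :: l', rfl, by simp [hl']; rfl⟩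
        · exact Or.inr ⟨u' :: l', f, rfl, by simp [hl']; rfl⟩
      · match rest' with
        | [] => exact Or.inr ⟨[u'], g, rfl, rfl⟩
        | z :: r =>
          replace hc' := List.isChain_cons_cons.mp hc'
          exact absurd hc'.1 (zyk_no_out_inr g z)

/-- A mapped chain in a copy is a chain. -/
lemma zyk_chain_of_map {k : ℕ} {i : Fin (k+1)} {l : List (ZykV k)}
    (h : (l.map (fun w => Sum.inl (i, w) : ZykV k → ZykV (k+1))).Chain' (ZykArc (k+1))) :
    l.Chain' (ZykArc k) := by
  replace h := (List.isChain_map _).mp h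
  exact h.imp (fun {a b} hab => (zyk_arc_inl_inl.mp hab).2)

/-- In the Zykov digraph there is at most one directed path between
any ordered pair of vertices: any two lists of distinct vertices which trace directed
paths (consecutive entries joined by arcs) from `u` to `v` coincide. -/
theorem stmt_8 (n : ℕ) (u v : ZykV n) (l₁ l₂ : List (ZykV n))
    (hc₁ : l₁.Chain' (ZykArc n)) (hc₂ : l₂.Chain' (ZykArc n))
    (hnd₁ : l₁.Nodup) (hnd₂ : l₂.Nodup)
    (hh₁ : l₁.head? = some u) (hh₂ : l₂.head? = some u)
    (ht₁ : l₁.getLast? = some v) (ht₂ : l₂.getLast? = some v) :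
    l₁ = l₂ := by
  induction n with
  | zero =>
    have key : ∀ (l : List (ZykV 0)), l.Chain' (ZykArc 0) → l.head? = some u → l = [u] := by
      intro l hc hh
      match l with
      | [] => simp at hh
      | [a] => simp_all
      | a :: b :: r =>
        replace hc := List.isChain_cons_cons.mp hc
        exact absurd hc.1 (zyk_no_arc_zero a b)
    rw [key l₁ hc₁ hh₁, key l₂ hc₂ hh₂]
  | succ k ih =>
    rcases u with ⟨i, u'⟩ | g
    · -- u is in copy i
      rcases zyk_decomp l₁ hc₁ i u' hh₁ with ⟨l₁', hh₁', rfl⟩ | ⟨l₁', f₁, hh₁', rfl⟩ <;>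
        rcases zyk_decomp l₂ hc₂ i u' hh₂ with ⟨l₂', hh₂', rfl⟩ | ⟨l₂', f₂, hh₂', rfl⟩
      · -- both stay inside copy i
        replace ht₁ := List.getLast?_map.symm.trans ht₁; replace ht₂ := List.getLast?_map.symm.trans ht₂
        obtain ⟨a₁, ha₁, hfa₁⟩ := Option.map_eq_some_iff.mp ht₁
        obtain ⟨a₂, ha₂, hfa₂⟩ := Option.map_eq_some_iff.mp ht₂
        have hae : a₁ = a₂ := by
          have h2 : (Sum.inl (i, a₁) : ZykV (k+1)) = Sum.inl (i, a₂) := hfa₁.trans hfa₂.symm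
          have h3 : (i, a₁) = (i, a₂) := Sum.inl_injective h2
          exact (Prod.ext_iff.mp h3).2
        subst hae
        rw [ih u' a₁ l₁' l₂' (zyk_chain_of_map hc₁) (zyk_chain_of_map hc₂)
          (List.Nodup.of_map _ hnd₁) (List.Nodup.of_map _ hnd₂) hh₁' hh₂' ha₁ ha₂]
      · -- l₁ inside, l₂ ends at a sink: contradiction via v
        replace ht₁ := List.getLast?_map.symm.trans ht₁
        obtain ⟨a₁, ha₁, hfa₁⟩ := Option.map_eq_some_iff.mp ht₁
        replace ht₂ := List.getLast?_concat.symm.trans ht₂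
        obtain rfl : Sum.inr f₂ = v := by injection ht₂
        simp at hfa₁
      · replace ht₂ := List.getLast?_map.symm.trans ht₂
        obtain ⟨a₂, ha₂, hfa₂⟩ := Option.map_eq_some_iff.mp ht₂
        replace ht₁ := List.getLast?_concat.symm.trans ht₁
        obtain rfl : Sum.inr f₁ = v := by injection ht₁
        simp at hfa₂
      · -- both end at a sink
        replace ht₁ := List.getLast?_concat.symm.trans ht₁; replace ht₂ := List.getLast?_concat.symm.trans ht₂
        obtain rfl : Sum.inr f₁ = v := by injection ht₁
        have hf : f₂ = f₁ := by
          have h2 : (Sum.inr f₂ : ZykV (k+1)) = Sum.inr f₁ := by injection ht₂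
          exact Sum.inr_injective h2
        subst hf
        replace hc₁ := List.isChain_append.mp hc₁; replace hc₂ := List.isChain_append.mp hc₂
        obtain ⟨hc₁', -, hlast₁⟩ := hc₁
        obtain ⟨hc₂', -, hlast₂⟩ := hc₂
        -- last of l₁' is f₂ i, last of l₂' is f₂ i
        have hl₁ : l₁'.getLast? = some (f₂ i) := by
          match hlg : l₁'.getLast? with
          | none =>
            rw [List.getLast?_eq_none_iff] at hlg
            subst hlg; simp at hh₁'
          | some a =>
            have harc := hlast₁ (Sum.inl (i, a))
              (by exact List.getLast?_map.trans (congrArg (Option.map _) hlg)) (Sum.inr f₂) rfl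
            exact congrArg some (zyk_arc_inl_inr.mp harc).symm
        have hl₂ : l₂'.getLast? = some (f₂ i) := by
          match hlg : l₂'.getLast? with
          | none =>
            rw [List.getLast?_eq_none_iff] at hlg
            subst hlg; simp at hh₂'
          | some a =>
            have harc := hlast₂ (Sum.inl (i, a))
              (by exact List.getLast?_map.trans (congrArg (Option.map _) hlg)) (Sum.inr f₂) rfl
            exact congrArg some (zyk_arc_inl_inr.mp harc).symm
        rw [ih u' (f₂ i) l₁' l₂' (zyk_chain_of_map hc₁') (zyk_chain_of_map hc₂')
          (List.Nodup.of_map _ hnd₁.of_append_left) (List.Nodup.of_map _ hnd₂.of_append_left)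
          hh₁' hh₂' hl₁ hl₂]
    · -- u is a sink: both lists are singletons
      rw [zyk_singleton_of_inr_head l₁ hc₁ g hh₁, zyk_singleton_of_inr_head l₂ hc₂ g hh₂]
end

section
/- The underlying undirected graph Zₙ of the Zykov digraph Z⃗ₙ has chromatic number exactly n. -/
/-- Recursive colouring of `ZykV n` with `n + 1` colours. -/
def zykCol : (n : ℕ) → ZykV n → Fin (n + 1)
  | 0, _ => 0
  | _ + 1, Sum.inl ⟨_, u⟩ => (zykCol _ u).castSucc
  | k + 1, Sum.inr _ => Fin.last (k + 1)

lemma zykCol_ne {n : ℕ} {x y : ZykV n} (h : ZykArc n x y) : zykCol n x ≠ zykCol n y := by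
  induction n with
  | zero => exact absurd h (by simp [ZykArc])
  | succ k ih =>
    match x, y with
    | Sum.inl ⟨i, u⟩, Sum.inl ⟨j, v⟩ =>
      obtain ⟨_, harc⟩ := h
      simpa [zykCol, Fin.castSucc_inj] using ih harc
    | Sum.inl ⟨i, u⟩, Sum.inr f =>
      simp only [zykCol]
      exact fun hc => (Fin.castSucc_lt_last _).ne hc
    | Sum.inr f, Sum.inl ⟨j, v⟩ => exact absurd h (by simp [ZykArc])
    | Sum.inr f, Sum.inr g => exact absurd h (by simp [ZykArc])

lemma zyk_colorable (n : ℕ) : (SimpleGraph.fromRel (ZykArc n)).Colorable (n + 1) := by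
  refine ⟨SimpleGraph.Coloring.mk (zykCol n) ?_⟩
  rintro x y ⟨hne, h | h⟩
  · exact zykCol_ne h
  · exact (zykCol_ne h).symm

lemma zyk_not_colorable (n : ℕ) : ¬ (SimpleGraph.fromRel (ZykArc n)).Colorable n := by
  induction n with
  | zero =>
    rintro ⟨C⟩
    exact (C PUnit.unit).elim0
  | succ k ih =>
    rintro ⟨C⟩
    classical
    -- the restriction of `C` to copy `i` is a proper colouring of the smaller graph
    have hcopy : ∀ (i : Fin (k + 1)) {u v : ZykV k},
        (SimpleGraph.fromRel (ZykArc k)).Adj u v →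
        C (Sum.inl (i, u)) ≠ C (Sum.inl (i, v)) := by
      rintro i u v ⟨hne, h | h⟩
      · exact C.valid ⟨fun h' => hne (congrArg Prod.snd (Sum.inl.inj h')), Or.inl ⟨rfl, h⟩⟩
      · exact C.valid ⟨fun h' => hne (congrArg Prod.snd (Sum.inl.inj h')), Or.inr ⟨rfl, h⟩⟩
    -- each colour `i` appears in copy `i`
    have hexists : ∀ i : Fin (k + 1), ∃ u : ZykV k, C (Sum.inl (i, u)) = i := by
      intro i
      by_contra hno
      push_neg at hno
      apply ih
      refine ⟨SimpleGraph.Coloring.mk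
        (fun u => Classical.choose (Fin.exists_succAbove_eq (hno u))) ?_⟩
      intro u v hadj hc
      have h2 : i.succAbove (Classical.choose (Fin.exists_succAbove_eq (hno u)))
          = i.succAbove (Classical.choose (Fin.exists_succAbove_eq (hno v))) :=
        congrArg i.succAbove hc
      rw [Classical.choose_spec (Fin.exists_succAbove_eq (hno u)),
        Classical.choose_spec (Fin.exists_succAbove_eq (hno v))] at h2
      exact hcopy i hadj h2
    choose g hg using hexists
    set c := C (Sum.inr g) with hc
    have : C (Sum.inl (c, g c)) ≠ C (Sum.inr g) :=
      C.valid ⟨by exact Sum.inl_ne_inr, Or.inl rfl⟩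
    exact this (by rw [hg c, hc])

/-- The underlying undirected Zykov graph `Z_{n+1}` (here the
symmetrisation of `ZykArc n` on `ZykV n`) has chromatic number exactly `n + 1`. -/
theorem stmt_9 (n : ℕ) :
    (SimpleGraph.fromRel (ZykArc n)).chromaticNumber = ((n + 1 : ℕ) : ℕ∞) := by
  refine le_antisymm ((zyk_colorable n).chromaticNumber_le) ?_
  by_contra hlt
  push_neg at hlt
  have hle : (SimpleGraph.fromRel (ZykArc n)).chromaticNumber ≤ (n : ℕ∞) := by
    exact Order.le_of_lt_add_one (by exact_mod_cast hlt)
  exact zyk_not_colorable n (SimpleGraph.chromaticNumber_le_iff_colorable.mp hle)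
end

section
/- The Zykov graph Zₙ is triangle-free for every n ≥ 1. -/
lemma zykArc_inl_inl {k : ℕ} (i j : Fin (k+1)) (u v : ZykV k) :
    ZykArc (k+1) (Sum.inl (i, u)) (Sum.inl (j, v)) = (i = j ∧ ZykArc k u v) := rfl

lemma zykArc_inl_inr {k : ℕ} (i : Fin (k+1)) (u : ZykV k) (f : (i : Fin (k+1)) → ZykV k) :
    ZykArc (k+1) (Sum.inl (i, u)) (Sum.inr f) = (f i = u) := rfl

lemma zykArc_inr_inl {k : ℕ} (i : Fin (k+1)) (u : ZykV k) (f : (i : Fin (k+1)) → ZykV k) :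
    ZykArc (k+1) (Sum.inr f) (Sum.inl (i, u)) = False := rfl

lemma zykArc_inr_inr {k : ℕ} (f g : (i : Fin (k+1)) → ZykV k) :
    ZykArc (k+1) (Sum.inr f) (Sum.inr g) = False := rfl

lemma zyk_no_tri : ∀ (n : ℕ) (a b c : ZykV n),
    (SimpleGraph.fromRel (ZykArc n)).Adj a b →
    (SimpleGraph.fromRel (ZykArc n)).Adj a c →
    (SimpleGraph.fromRel (ZykArc n)).Adj b c → False := by
  intro n
  induction n with
  | zero =>
    intro a b c hab _ _
    simp [SimpleGraph.fromRel_adj, ZykArc] at hab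
  | succ k ih =>
    rintro (⟨i, u⟩ | f) (⟨j, v⟩ | g) (⟨l, w⟩ | h) hab hac hbc <;>
      simp only [SimpleGraph.fromRel_adj, SimpleGraph.fromRel, zykArc_inl_inl, zykArc_inl_inr,
        zykArc_inr_inl, zykArc_inr_inr, or_false, false_or, or_self, ne_eq] at hab hac hbc
    · -- all inl
      obtain ⟨hab_ne, hab'⟩ := hab
      obtain ⟨hac_ne, hac'⟩ := hac
      obtain ⟨hbc_ne, hbc'⟩ := hbc
      have hij : i = j := by rcases hab' with ⟨h, _⟩ | ⟨h, _⟩ <;> simp [h]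
      have hil : i = l := by rcases hac' with ⟨h, _⟩ | ⟨h, _⟩ <;> simp [h]
      subst hij; subst hil
      refine ih u v w ?_ ?_ ?_
      · exact ⟨fun h => hab_ne (by rw [h]), by tauto⟩
      · exact ⟨fun h => hac_ne (by rw [h]), by tauto⟩
      · exact ⟨fun h => hbc_ne (by rw [h]), by tauto⟩
    · -- c = inr h
      obtain ⟨hab_ne, hab'⟩ := hab
      have hij : i = j := by rcases hab' with ⟨h, _⟩ | ⟨h, _⟩ <;> simp [h]
      subst hij
      exact hab_ne (by rw [← hac.2, ← hbc.2])
    · -- b = inr g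
      obtain ⟨hac_ne, hac'⟩ := hac
      have hil : i = l := by rcases hac' with ⟨h, _⟩ | ⟨h, _⟩ <;> simp [h]
      subst hil
      exact hac_ne (by rw [← hab.2, ← hbc.2])
    · exact hbc.2
    · -- a = inr f
      obtain ⟨hbc_ne, hbc'⟩ := hbc
      have hjl : j = l := by rcases hbc' with ⟨h, _⟩ | ⟨h, _⟩ <;> simp [h]
      subst hjl
      exact hbc_ne (by rw [← hab.2, ← hac.2])
    · exact hac.2
    · exact hab.2
    · exact hab.2

/-- The Zykov graph (the underlying undirected graph of the Zykov
digraph) is triangle-free. -/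
theorem stmt_10 (n : ℕ) : (SimpleGraph.fromRel (ZykArc n)).CliqueFree 3 := by
  classical
  intro s hs
  rw [SimpleGraph.is3Clique_iff] at hs
  obtain ⟨a, b, c, hab, hac, hbc, -⟩ := hs
  exact zyk_no_tri n a b c hab hac hbc
end

section
/- Every infinite graph either contains an infinite clique, or has bounded clique number, or contains the disjoint union of all finite cliques (i.e., vertex-disjoint copies of Kₙ for every n, with no edges between them) as an induced subgraph. -/
open SimpleGraph

/-- `Unb G A` : `A` contains cliques of every size. -/
private def Unb {V : Type*} (G : SimpleGraph V) (A : Set V) : Prop :=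
  ∀ n, ∃ s : Finset V, ↑s ⊆ A ∧ G.IsNClique n s

private lemma exists_good {V : Type*} (G : SimpleGraph V) (hub : Unb G Set.univ)
    (hnc : ¬ ∃ S : Set V, S.Infinite ∧ G.IsClique S) :
    ∃ A : Set V, Unb G A ∧ ∀ v ∈ A, ¬ Unb G (A ∩ G.neighborSet v) := by
  by_contra hc
  push_neg at hc
  -- hc : ∀ A, Unb G A → ∃ v ∈ A, Unb G (A ∩ N v)
  let step : {A : Set V // Unb G A} → {A : Set V // Unb G A} :=
    fun A => ⟨A.1 ∩ G.neighborSet (hc A.1 A.2).choose, (hc A.1 A.2).choose_spec.2⟩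
  let seq : ℕ → {A : Set V // Unb G A} := fun n => step^[n] ⟨Set.univ, hub⟩
  let vtx : ℕ → V := fun n => (hc (seq n).1 (seq n).2).choose
  have hseq : ∀ n, seq (n + 1) = step (seq n) := fun n =>
    Function.iterate_succ_apply' step n _
  have hstep1 : ∀ n, (seq (n + 1)).1 = (seq n).1 ∩ G.neighborSet (vtx n) := by
    intro n; rw [hseq n]
  have hmono : ∀ n m, n ≤ m → (seq m).1 ⊆ (seq n).1 := by
    intro n m hnm
    induction m with
    | zero => simp_all
    | succ k ih =>
      rcases Nat.lt_or_ge n (k + 1) with h | h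
      · have : (seq (k+1)).1 ⊆ (seq k).1 := by
          rw [hstep1 k]; exact Set.inter_subset_left
        exact this.trans (ih (Nat.lt_succ_iff.mp h))
      · have : n = k + 1 := le_antisymm hnm h
        subst this; exact subset_rfl
  have hvmem : ∀ n, vtx n ∈ (seq n).1 := fun n => (hc (seq n).1 (seq n).2).choose_spec.1
  have hadj : ∀ n m, n < m → G.Adj (vtx n) (vtx m) := by
    intro n m hnm
    have h1 : vtx m ∈ (seq (n+1)).1 := hmono (n+1) m hnm (hvmem m)
    rw [hstep1 n] at h1
    exact h1.2
  have hinj : Function.Injective vtx := by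
    intro n m h
    by_contra hne
    rcases lt_or_gt_of_ne hne with hlt | hlt
    · exact (hadj n m hlt).ne h
    · exact (hadj m n hlt).ne h.symm
  refine hnc ⟨Set.range vtx, Set.infinite_range_of_injective hinj, ?_⟩
  rintro _ ⟨n, rfl⟩ _ ⟨m, rfl⟩ hne
  rcases lt_trichotomy n m with h | h | h
  · exact hadj n m h
  · exact absurd (congrArg vtx h) hne
  · exact (hadj m n h).symm

private lemma avoid {V : Type*} (G : SimpleGraph V) (A : Set V) (hA : Unb G A)
    (hb : ∀ v ∈ A, ¬ Unb G (A ∩ G.neighborSet v)) (n : ℕ)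
    (F : Finset V) (hF : ↑F ⊆ A) :
    ∃ s : Finset V, ↑s ⊆ A ∧ G.IsNClique n s ∧
      ∀ x ∈ s, ∀ v ∈ F, x ≠ v ∧ ¬ G.Adj x v := by
  classical
  have hbd : ∀ v ∈ F, ∃ m : ℕ, ∀ s : Finset V, ↑s ⊆ A ∩ G.neighborSet v →
      G.IsClique (s : Set V) → s.card < m := by
    intro v hv
    have h := hb v (hF hv)
    rw [Unb] at h; push_neg at h
    obtain ⟨m, hm⟩ := h
    refine ⟨m, fun s hs hcl => ?_⟩
    by_contra hlt
    push_neg at hlt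
    obtain ⟨t, ht, htc⟩ := Finset.exists_subset_card_eq hlt
    exact hm t ((Finset.coe_subset.mpr ht).trans hs) ⟨hcl.subset (Finset.coe_subset.mpr ht), htc⟩
  choose! m hm using hbd
  set M : ℕ := ∑ v ∈ F, m v with hM
  obtain ⟨C, hCA, hCcl⟩ := hA (n + M)
  set p : V → Prop := fun x => ∀ v ∈ F, x ≠ v ∧ ¬ G.Adj x v with hp
  have hbadsub : C.filter (fun x => ¬ p x) ⊆
      F.biUnion (fun v => C.filter (fun x => x = v ∨ G.Adj x v)) := by
    intro x hx
    rw [Finset.mem_filter] at hx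
    obtain ⟨hxC, hxp⟩ := hx
    have hxp' : ¬ ∀ v ∈ F, x ≠ v ∧ ¬ G.Adj x v := hxp
    push_neg at hxp'
    obtain ⟨v, hvF, hvx⟩ := hxp'
    rw [Finset.mem_biUnion]
    refine ⟨v, hvF, Finset.mem_filter.mpr ⟨hxC, ?_⟩⟩
    by_cases hxv : x = v
    · exact Or.inl hxv
    · exact Or.inr (hvx hxv)
  have hbadcard : (C.filter (fun x => ¬ p x)).card ≤ M := by
    refine le_trans (Finset.card_le_card hbadsub) ?_
    refine le_trans (Finset.card_biUnion_le) ?_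
    rw [hM]
    refine Finset.sum_le_sum ?_
    intro v hv
    have hsub : C.filter (fun x => x = v ∨ G.Adj x v) ⊆
        insert v (C.filter (fun x => G.Adj x v)) := by
      intro x hx
      rw [Finset.mem_filter] at hx
      rcases hx.2 with h | h
      · exact Finset.mem_insert.mpr (Or.inl h)
      · exact Finset.mem_insert.mpr (Or.inr (Finset.mem_filter.mpr ⟨hx.1, h⟩))
    have hcard2 : (C.filter (fun x => G.Adj x v)).card < m v := by
      refine hm v hv _ ?_ ?_
      · intro x hx
        simp only [Finset.coe_filter, Set.mem_setOf_eq] at hx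
        exact ⟨hCA hx.1, hx.2.symm⟩
      · exact hCcl.1.subset (by intro x hx; simp only [Finset.coe_filter, Set.mem_setOf_eq] at hx; exact hx.1)
    calc (C.filter (fun x => x = v ∨ G.Adj x v)).card
        ≤ (insert v (C.filter (fun x => G.Adj x v))).card := Finset.card_le_card hsub
      _ ≤ (C.filter (fun x => G.Adj x v)).card + 1 := Finset.card_insert_le _ _
      _ ≤ m v := hcard2
  have hgoodcard : n ≤ (C.filter p).card := by
    have h1 := Finset.card_filter_add_card_filter_not (s := C) (p := p)
    have h2 : C.card = n + M := hCcl.2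
    omega
  obtain ⟨s, hs, hsc⟩ := Finset.exists_subset_card_eq hgoodcard
  have hsC : s ⊆ C := hs.trans (Finset.filter_subset _ _)
  refine ⟨s, (Finset.coe_subset.mpr hsC).trans hCA,
    ⟨hCcl.1.subset (Finset.coe_subset.mpr hsC), hsc⟩, ?_⟩
  intro x hx
  have := Finset.mem_filter.mp (hs hx)
  exact this.2

private lemma exists_blocks {V : Type*} (G : SimpleGraph V) (A : Set V) (hA : Unb G A)
    (hb : ∀ v ∈ A, ¬ Unb G (A ∩ G.neighborSet v)) :
    ∃ B : ℕ → Finset V, (∀ n, G.IsNClique (n + 1) (B n)) ∧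
      (∀ i j, i < j → ∀ x ∈ B j, ∀ v ∈ B i, x ≠ v ∧ ¬ G.Adj x v) := by
  classical
  have key := avoid G A hA hb
  let next : ℕ → Finset V → Finset V := fun n F =>
    if h : ↑F ⊆ A then (key n F h).choose else ∅
  have next_spec : ∀ n F (h : ↑F ⊆ A), ↑(next n F) ⊆ A ∧ G.IsNClique n (next n F) ∧
      ∀ x ∈ next n F, ∀ v ∈ F, x ≠ v ∧ ¬ G.Adj x v := by
    intro n F h
    simp only [next, dif_pos h]
    exact (key n F h).choose_spec
  let f : ℕ → Finset V × Finset V := fun n =>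
    Nat.rec (next 1 ∅, ∅) (fun k p => (next (k + 2) (p.2 ∪ p.1), p.2 ∪ p.1)) n
  have hf0 : f 0 = (next 1 ∅, ∅) := rfl
  have hfs : ∀ k, f (k + 1) = (next (k + 2) ((f k).2 ∪ (f k).1), (f k).2 ∪ (f k).1) :=
    fun k => rfl
  have hemp : (↑(∅ : Finset V) : Set V) ⊆ A := by simp
  have hsubA : ∀ k, ↑(f k).2 ⊆ A ∧ ↑(f k).1 ⊆ A := by
    intro k
    induction k with
    | zero =>
      constructor
      · simp [hf0]
      · rw [hf0]; exact (next_spec 1 ∅ hemp).1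
    | succ k ih =>
      have hu : ↑((f k).2 ∪ (f k).1) ⊆ A := by
        rw [Finset.coe_union]; exact Set.union_subset ih.1 ih.2
      constructor
      · rw [hfs k]; exact hu
      · rw [hfs k]; exact (next_spec (k + 2) _ hu).1
  have h1 : ∀ n, G.IsNClique (n + 1) (f n).1 := by
    intro n
    cases n with
    | zero => exact (next_spec 1 ∅ hemp).2.1
    | succ k =>
      have hu : ↑((f k).2 ∪ (f k).1) ⊆ A := by
        rw [Finset.coe_union]; exact Set.union_subset (hsubA k).1 (hsubA k).2
      rw [hfs k]
      exact (next_spec (k + 2) _ hu).2.1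
  refine ⟨fun n => (f n).1, h1, ?_⟩
  · have hacc : ∀ n, ∀ i < n, (f i).1 ⊆ (f n).2 := by
      intro n
      induction n with
      | zero => intro i hi; omega
      | succ k ih =>
        intro i hi
        rw [hfs k]
        rcases Nat.lt_or_ge i k with h | h
        · exact (ih i h).trans Finset.subset_union_left
        · have : i = k := by omega
          subst this
          exact Finset.subset_union_right
    intro i j hij x hx v hv
    obtain ⟨k, rfl⟩ : ∃ k, j = k + 1 := ⟨j - 1, by omega⟩
    have hu : ↑((f k).2 ∪ (f k).1) ⊆ A := by
      rw [Finset.coe_union]; exact Set.union_subset (hsubA k).1 (hsubA k).2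
    have hx0 : x ∈ (f (k + 1)).1 := hx
    have hx' : x ∈ next (k + 2) ((f k).2 ∪ (f k).1) := by rwa [hfs k] at hx0
    have hv0 : v ∈ (f i).1 := hv
    have hv' : v ∈ (f k).2 ∪ (f k).1 := by
      rcases Nat.lt_or_ge i k with h | h
      · exact Finset.mem_union_left _ (hacc k i h hv0)
      · have : i = k := by omega
        subst this
        exact Finset.mem_union_right _ hv0
    exact (next_spec (k + 2) _ hu).2.2 x hx' v hv'

/-- Every infinite graph contains an infinite clique, or has bounded
clique number, or contains the disjoint union of all finite cliques (one copy of `Kₙ`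
for every `n`) as an induced subgraph. -/
theorem stmt_12 {V : Type*} [Infinite V] (G : SimpleGraph V) :
    (∃ S : Set V, S.Infinite ∧ G.IsClique S) ∨
      (∃ k : ℕ, G.CliqueFree k) ∨
      Nonempty ((SimpleGraph.fromRel (fun a b : Σ n : ℕ, Fin (n + 1) => a.1 = b.1)) ↪g G) := by
  classical
  by_cases hk : ∃ k : ℕ, G.CliqueFree k
  · exact Or.inr (Or.inl hk)
  by_cases hS : ∃ S : Set V, S.Infinite ∧ G.IsClique S
  · exact Or.inl hS
  refine Or.inr (Or.inr ?_)
  push_neg at hk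
  have hub : Unb G Set.univ := by
    intro n
    have h := hk n
    rw [SimpleGraph.CliqueFree] at h; push_neg at h
    obtain ⟨s, hs⟩ := h
    exact ⟨s, by simp, hs⟩
  obtain ⟨A, hA, hb⟩ := exists_good G hub hS
  obtain ⟨B, hBc, hBx⟩ := exists_blocks G A hA hb
  have hcard : ∀ n, (B n).card = n + 1 := fun n => (hBc n).2
  let e : ∀ n, Fin (n + 1) ≃ {x // x ∈ B n} :=
    fun n => (((B n).equivFin).trans (finCongr (hcard n))).symm
  let ψ : (Σ n : ℕ, Fin (n + 1)) → V := fun a => (e a.1 a.2 : V)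
  have hmem : ∀ (a : Σ n : ℕ, Fin (n + 1)), ψ a ∈ B a.1 := fun a => (e a.1 a.2).2
  have hcross : ∀ (a b : Σ n : ℕ, Fin (n + 1)), a.1 ≠ b.1 →
      ψ a ≠ ψ b ∧ ¬ G.Adj (ψ a) (ψ b) := by
    intro a b hne
    rcases lt_or_gt_of_ne hne with h | h
    · have := hBx a.1 b.1 h (ψ b) (hmem b) (ψ a) (hmem a)
      exact ⟨Ne.symm this.1, fun hadj => this.2 hadj.symm⟩
    · exact hBx b.1 a.1 h (ψ a) (hmem a) (ψ b) (hmem b)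
  have hinj : Function.Injective ψ := by
    rintro ⟨n, i⟩ ⟨m, j⟩ h
    by_cases hnm : n = m
    · subst hnm
      have : e n i = e n j := Subtype.ext h
      have hij : i = j := (e n).injective this
      rw [hij]
    · exact absurd h (hcross ⟨n, i⟩ ⟨m, j⟩ hnm).1
  refine ⟨⟨⟨ψ, hinj⟩, ?_⟩⟩
  rintro ⟨n, i⟩ ⟨m, j⟩
  simp only [Function.Embedding.coeFn_mk, SimpleGraph.fromRel_adj]
  constructor
  · intro hadj
    by_cases hnm : n = m
    · subst hnm
      refine ⟨?_, Or.inl rfl⟩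
      intro heq
      exact G.loopless.irrefl _ (heq ▸ hadj)
    · exact absurd hadj (hcross ⟨n, i⟩ ⟨m, j⟩ hnm).2
  · rintro ⟨hne, h⟩
    have hnm : n = m := h.elim id Eq.symm
    subst hnm
    have hij : i ≠ j := fun hij => hne (by rw [hij])
    refine (hBc n).1 (hmem ⟨n, i⟩) (hmem ⟨n, j⟩) ?_
    intro heq
    exact hij ((e n).injective (Subtype.ext heq))
end

section
/- Let 𝒻 be a countable family of finite graphs such that the set {χ(F) : F ∈ 𝒻} is unbounded, and suppose every graph in 𝒻 is a disjoint union of complete graphs. Then the disjoint union G_𝒻 of the members of 𝒻 has the property that every induced subgraph of G_𝒻 with infinite chromatic number contains every member of 𝒻 as an induced subgraph. -/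
/-- The disjoint union of a countable family of finite graphs `F n` on `Fin (N n)`,
realised on the sigma type `Σ n, Fin (N n)`. -/
def disjointUnionGraph (N : ℕ → ℕ) (F : ∀ n : ℕ, SimpleGraph (Fin (N n))) :
    SimpleGraph (Σ n : ℕ, Fin (N n)) :=
  SimpleGraph.fromRel (fun a b => ∃ h : a.1 = b.1, (F b.1).Adj (h ▸ a.2) b.2)

namespace Stmt14

variable {N : ℕ → ℕ} {F : ∀ n : ℕ, SimpleGraph (Fin (N n))}

lemma du_adj_fst {a b} (h : (disjointUnionGraph N F).Adj a b) : a.1 = b.1 := by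
  rcases h with ⟨hne, ⟨h, _⟩ | ⟨h, _⟩⟩
  · exact h
  · exact h.symm

lemma du_adj_mk {n : ℕ} {i j : Fin (N n)} :
    (disjointUnionGraph N F).Adj ⟨n, i⟩ ⟨n, j⟩ ↔ (F n).Adj i j := by
  constructor
  · rintro ⟨hne, ⟨h, ha⟩ | ⟨h, ha⟩⟩
    · cases h; exact ha
    · cases h; exact ha.symm
  · intro ha
    exact ⟨by simpa using ha.ne, Or.inl ⟨rfl, ha⟩⟩

lemma du_trans
    (hcluster : ∀ (n : ℕ) (u v w : Fin (N n)),
      (F n).Adj u v → (F n).Adj v w → u ≠ w → (F n).Adj u w)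
    {a b c : Σ n : ℕ, Fin (N n)} (hab : (disjointUnionGraph N F).Adj a b)
    (hbc : (disjointUnionGraph N F).Adj b c) (hac : a ≠ c) :
    (disjointUnionGraph N F).Adj a c := by
  obtain ⟨n, i⟩ := a; obtain ⟨n', j⟩ := b; obtain ⟨n'', k⟩ := c
  obtain rfl : n = n' := du_adj_fst hab
  obtain rfl : n = n'' := du_adj_fst hbc
  rw [du_adj_mk] at hab hbc ⊢
  exact hcluster n i j k hab hbc (fun h => hac (by rw [h]))

variable {s : Set (Σ n : ℕ, Fin (N n))}

/-- the relation "equal or adjacent" on the induced subgraph. -/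
def Rrel (F : ∀ n : ℕ, SimpleGraph (Fin (N n))) (s : Set (Σ n : ℕ, Fin (N n))) (u v : ↥s) : Prop :=
  u = v ∨ ((disjointUnionGraph N F).induce s).Adj u v

def clus (F : ∀ n : ℕ, SimpleGraph (Fin (N n))) (s : Set (Σ n : ℕ, Fin (N n))) (u : ↥s) : Set ↥s :=
  {v | Rrel F s u v}

lemma hadj_induce {u v : ↥s} :
    ((disjointUnionGraph N F).induce s).Adj u v ↔ (disjointUnionGraph N F).Adj u.1 v.1 := Iff.rfl

lemma Rrel_refl (u : ↥s) : Rrel F s u u := Or.inl rfl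

lemma Rrel_symm {u v : ↥s} (h : Rrel F s u v) : Rrel F s v u := by
  rcases h with rfl | h
  · exact Or.inl rfl
  · exact Or.inr h.symm

lemma Rrel_trans
    (hcluster : ∀ (n : ℕ) (u v w : Fin (N n)),
      (F n).Adj u v → (F n).Adj v w → u ≠ w → (F n).Adj u w)
    {u v w : ↥s} (h1 : Rrel F s u v) (h2 : Rrel F s v w) : Rrel F s u w := by
  rcases h1 with rfl | h1
  · exact h2
  rcases h2 with rfl | h2
  · exact Or.inr h1
  by_cases huw : u = w
  · exact Or.inl huw
  · refine Or.inr ?_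
    rw [hadj_induce] at h1 h2 ⊢
    exact du_trans hcluster h1 h2 (fun h => huw (Subtype.ext h))

lemma mem_clus_self (u : ↥s) : u ∈ clus F s u := Rrel_refl u

lemma clus_eq
    (hcluster : ∀ (n : ℕ) (u v w : Fin (N n)),
      (F n).Adj u v → (F n).Adj v w → u ≠ w → (F n).Adj u w)
    {u v : ↥s} (h : Rrel F s u v) : clus F s u = clus F s v := by
  ext x
  exact ⟨fun hx => Rrel_trans hcluster (Rrel_symm h) hx,
         fun hx => Rrel_trans hcluster h hx⟩

lemma clus_fst {u v : ↥s} (h : v ∈ clus F s u) : (v : Σ n : ℕ, Fin (N n)).1 = (u : Σ n : ℕ, Fin (N n)).1 := by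
  rcases h with rfl | h
  · rfl
  · exact (du_adj_fst (hadj_induce.mp h)).symm

lemma clus_finite (u : ↥s) : (clus F s u).Finite := by
  rw [← Set.finite_coe_iff]
  refine Finite.of_injective
    (fun v => Fin.cast (congrArg N (clus_fst v.2)) (v.1 : Σ n : ℕ, Fin (N n)).2) ?_
  rintro ⟨v, hv⟩ ⟨w, hw⟩ h
  have h1 : (v : Σ n : ℕ, Fin (N n)).1 = (w : Σ n : ℕ, Fin (N n)).1 :=
    (clus_fst hv).trans (clus_fst hw).symm
  have h2 : ((v : Σ n : ℕ, Fin (N n)).2 : ℕ) = ((w : Σ n : ℕ, Fin (N n)).2 : ℕ) := by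
    simpa using congrArg Fin.val h
  have hvw : (v : Σ n : ℕ, Fin (N n)) = (w : Σ n : ℕ, Fin (N n)) :=
    Sigma.ext h1 ((Fin.heq_ext_iff (congrArg N h1)).mpr h2)
  exact Subtype.ext (Subtype.ext hvw)

lemma colorable_of_bounded
    (hcluster : ∀ (n : ℕ) (u v w : Fin (N n)),
      (F n).Adj u v → (F n).Adj v w → u ≠ w → (F n).Adj u w)
    {k : ℕ} (hb : ∀ u : ↥s, (clus F s u).ncard ≤ k) :
    ((disjointUnionGraph N F).induce s).Colorable k := by
  classical
  set cset : ↥s → Set ↥s := fun u =>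
    {v | v ∈ clus F s u ∧ ((v : Σ n : ℕ, Fin (N n)).2 : ℕ) < ((u : Σ n : ℕ, Fin (N n)).2 : ℕ)}
    with hcset
  have hlt : ∀ u : ↥s, (cset u).ncard < k := by
    intro u
    have hss : cset u ⊂ clus F s u := by
      constructor
      · exact fun v hv => hv.1
      · intro hsub
        exact lt_irrefl _ (hsub (mem_clus_self u)).2
    exact lt_of_lt_of_le (Set.ncard_lt_ncard hss (clus_finite u)) (hb u)
  have key : ∀ u w : ↥s, ((disjointUnionGraph N F).induce s).Adj u w →
      ((u : Σ n : ℕ, Fin (N n)).2 : ℕ) < ((w : Σ n : ℕ, Fin (N n)).2 : ℕ) →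
      (cset u).ncard < (cset w).ncard := by
    intro u w hadj hvw
    have hcl : clus F s u = clus F s w := clus_eq hcluster (Or.inr hadj)
    have hss : cset u ⊂ cset w := by
      constructor
      · rintro v ⟨hv1, hv2⟩
        exact ⟨hcl ▸ hv1, hv2.trans hvw⟩
      · intro hsub
        have hu : u ∈ cset w := ⟨hcl ▸ mem_clus_self u, hvw⟩
        exact lt_irrefl _ (hsub hu).2
    exact Set.ncard_lt_ncard hss ((clus_finite w).subset (fun v hv => hv.1))
  refine ⟨SimpleGraph.Coloring.mk (fun u => ⟨(cset u).ncard, hlt u⟩) ?_⟩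
  intro u w hadj
  have hfst : (u : Σ n : ℕ, Fin (N n)).1 = (w : Σ n : ℕ, Fin (N n)).1 :=
    du_adj_fst (hadj_induce.mp hadj)
  have hvne : ((u : Σ n : ℕ, Fin (N n)).2 : ℕ) ≠ ((w : Σ n : ℕ, Fin (N n)).2 : ℕ) := by
    intro hval
    apply hadj.ne
    exact Subtype.ext (Sigma.ext hfst ((Fin.heq_ext_iff (congrArg N hfst)).mpr hval))
  simp only [ne_eq, Fin.mk.injEq]
  rcases lt_or_gt_of_ne hvne with h | h
  · exact Nat.ne_of_lt (key u w hadj h)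
  · exact Nat.ne_of_gt (key w u hadj.symm h)

lemma embed_of_unbounded
    (hcluster : ∀ (n : ℕ) (u v w : Fin (N n)),
      (F n).Adj u v → (F n).Adj v w → u ≠ w → (F n).Adj u w)
    (hbig : ∀ k : ℕ, ∃ u : ↥s, k ≤ (clus F s u).ncard) (m : ℕ) :
    Nonempty ((F m) ↪g (disjointUnionGraph N F).induce s) := by
  classical
  choose w hw using hbig
  set f : ℕ → ↥s := fun r => Nat.rec (w (N m)) (fun _ prev => w ((clus F s prev).ncard + 1)) r
    with hf
  have hmono : ∀ r, (clus F s (f r)).ncard < (clus F s (f (r + 1))).ncard := by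
    intro r
    exact Nat.lt_of_succ_le (hw ((clus F s (f r)).ncard + 1))
  have hM0 : ∀ r, N m ≤ (clus F s (f r)).ncard := by
    intro r
    induction r with
    | zero => exact hw (N m)
    | succ r ih => exact ih.trans (le_of_lt (hmono r))
  have hsm : StrictMono fun r => (clus F s (f r)).ncard := strictMono_nat_of_lt_succ hmono
  have hclne : ∀ r r' : ℕ, r ≠ r' → clus F s (f r) ≠ clus F s (f r') := by
    intro r r' hne h
    exact hne (hsm.injective (by rw [h]))
  have hpick : ∀ r : ℕ, ∃ e : Fin (N m) → ↥s,
      Function.Injective e ∧ ∀ j, e j ∈ clus F s (f r) := by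
    intro r
    have hfin := clus_finite (F := F) (f r)
    have hcard : N m ≤ hfin.toFinset.card := by
      rw [← Set.ncard_eq_toFinset_card _ hfin]
      exact hM0 r
    obtain ⟨t, hts, htc⟩ := Finset.exists_subset_card_eq hcard
    refine ⟨fun j => ((t.equivFinOfCardEq htc).symm j : ↥s), ?_, ?_⟩
    · intro a b hab
      have := Subtype.ext hab (p := (· ∈ t))
      exact (t.equivFinOfCardEq htc).symm.injective this
    · intro j
      have ht : (((t.equivFinOfCardEq htc).symm j : { x // x ∈ t }) : ↥s) ∈ t :=
        ((t.equivFinOfCardEq htc).symm j).2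
      exact hfin.mem_toFinset.mp (hts ht)
  choose e he1 he2 using hpick
  -- cluster structure of `F m`
  set Rm : Fin (N m) → Fin (N m) → Prop := fun i j => i = j ∨ (F m).Adj i j with hRm
  have Rm_symm : ∀ {i j}, Rm i j → Rm j i := by
    rintro i j (rfl | h)
    · exact Or.inl rfl
    · exact Or.inr h.symm
  have Rm_trans : ∀ {i j k}, Rm i j → Rm j k → Rm i k := by
    rintro i j k (rfl | h1) h2
    · exact h2
    rcases h2 with rfl | h2
    · exact Or.inr h1
    by_cases hik : i = k
    · exact Or.inl hik
    · exact Or.inr (hcluster m i j k h1 h2 hik)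
  set Cm : Fin (N m) → Finset (Fin (N m)) := fun i => Finset.univ.filter (fun j => Rm i j)
    with hCm
  have mem_Cm : ∀ {i j}, j ∈ Cm i ↔ Rm i j := by
    intro i j; simp [hCm]
  have hCm_self : ∀ i, i ∈ Cm i := fun i => mem_Cm.mpr (Or.inl rfl)
  have hCm_eq : ∀ {i j}, Rm i j → Cm i = Cm j := by
    intro i j h
    ext x
    simp only [mem_Cm]
    exact ⟨fun hx => Rm_trans (Rm_symm h) hx, fun hx => Rm_trans h hx⟩
  set rep : Fin (N m) → Fin (N m) := fun i => (Cm i).min' ⟨i, hCm_self i⟩ with hrep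
  have hrep_mem : ∀ i, rep i ∈ Cm i := fun i => (Cm i).min'_mem _
  have hrep_eq : ∀ {i j}, Rm i j → rep i = rep j := by
    intro i j h
    simp only [hrep]
    congr 1
    exact hCm_eq h
  have hrep_ne : ∀ {i j}, ¬ Rm i j → rep i ≠ rep j := by
    intro i j h hrepeq
    apply h
    have h1 : Rm i (rep i) := mem_Cm.mp (hrep_mem i)
    have h2 : Rm j (rep j) := mem_Cm.mp (hrep_mem j)
    exact Rm_trans h1 (hrepeq ▸ Rm_symm h2)
  set pos : Fin (N m) → ℕ := fun i => ((Cm i).filter (fun j => j < i)).card with hposdef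
  have hpos : ∀ i, pos i < N m := by
    intro i
    have hne : (Cm i).filter (fun j => j < i) ≠ Finset.univ := by
      intro h
      have : i ∈ (Cm i).filter (fun j => j < i) := h ▸ Finset.mem_univ i
      exact lt_irrefl i (Finset.mem_filter.mp this).2
    have := Finset.card_lt_card (Finset.ssubset_univ_iff.mpr hne)
    simpa using this
  have hposmono : ∀ {i j}, Rm i j → i < j → pos i < pos j := by
    intro i j h hij
    have hCeq : Cm i = Cm j := hCm_eq h
    have hsub : (Cm i).filter (fun x => x < i) ⊆ (Cm j).filter (fun x => x < j) := by
      intro x hx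
      rw [Finset.mem_filter] at hx ⊢
      exact ⟨hCeq ▸ hx.1, hx.2.trans hij⟩
    refine Finset.card_lt_card ((Finset.ssubset_iff_of_subset hsub).mpr ?_)
    refine ⟨i, ?_, ?_⟩
    · exact Finset.mem_filter.mpr ⟨hCeq ▸ hCm_self i, hij⟩
    · intro hmem
      exact lt_irrefl i (Finset.mem_filter.mp hmem).2
  have hpos_ne : ∀ {i j}, Rm i j → i ≠ j → pos i ≠ pos j := by
    intro i j h hij
    rcases lt_or_gt_of_ne hij with hlt | hgt
    · exact Nat.ne_of_lt (hposmono h hlt)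
    · exact Nat.ne_of_gt (hposmono (Rm_symm h) hgt)
  -- the embedding
  set g : Fin (N m) → ↥s := fun i => e (rep i) ⟨pos i, hpos i⟩ with hg
  have hg_mem : ∀ i, g i ∈ clus F s (f (rep i)) := fun i => he2 (rep i) _
  have keyA : ∀ {i j}, ¬ Rm i j → ¬ Rrel F s (g i) (g j) := by
    intro i j h hr
    have hrne : ((rep i : ℕ)) ≠ ((rep j : ℕ)) := fun hh => hrep_ne h (Fin.ext hh)
    apply hclne _ _ hrne
    have e1 : clus F s (f (rep i)) = clus F s (g i) := clus_eq hcluster (hg_mem i)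
    have e2 : clus F s (f (rep j)) = clus F s (g j) := clus_eq hcluster (hg_mem j)
    rw [e1, e2]
    exact clus_eq hcluster hr
  have keyB : ∀ {i j}, Rm i j → i ≠ j → g i ≠ g j ∧ Rrel F s (g i) (g j) := by
    intro i j h hij
    have hre : rep i = rep j := hrep_eq h
    constructor
    · intro hgij
      apply hpos_ne h hij
      simp only [hg] at hgij
      rw [hre] at hgij
      exact congrArg Fin.val (he1 (rep j) hgij)
    · have h1 : Rrel F s (f (rep i)) (g i) := hg_mem i
      have h2 : Rrel F s (f (rep i)) (g j) := by
        rw [hre]; exact hg_mem j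
      exact Rrel_trans hcluster (Rrel_symm h1) h2
  refine ⟨⟨⟨g, ?_⟩, ?_⟩⟩
  · intro i j hgij
    by_contra hij
    by_cases h : Rm i j
    · exact (keyB h hij).1 hgij
    · exact keyA h (Or.inl hgij)
  · intro i j
    constructor
    · intro hadj
      by_cases h : Rm i j
      · rcases h with rfl | h
        · exact absurd hadj (((disjointUnionGraph N F).induce s).irrefl)
        · exact h
      · exact absurd (Or.inr hadj) (keyA h)
    · intro hadj
      obtain ⟨hne, hr⟩ := keyB (Or.inr hadj) hadj.ne
      rcases hr with heq | hr
      · exact absurd heq hne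
      · exact hr

end Stmt14

/-- Let `𝒻 = (F n)` be a countable family of finite graphs with
unbounded chromatic numbers, each of which is a disjoint union of complete graphs
(i.e. adjacency together with distinctness is transitive). Then every induced subgraph
of the disjoint union `G_𝒻` with infinite chromatic number contains every member of
the family as an induced subgraph. -/
theorem stmt_14 (N : ℕ → ℕ) (F : ∀ n : ℕ, SimpleGraph (Fin (N n)))
    (hunbdd : ∀ k : ℕ, ∃ n, (k : ℕ∞) ≤ (F n).chromaticNumber)
    (hcluster : ∀ (n : ℕ) (u v w : Fin (N n)),
      (F n).Adj u v → (F n).Adj v w → u ≠ w → (F n).Adj u w)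
    (s : Set (Σ n : ℕ, Fin (N n)))
    (hs : ((disjointUnionGraph N F).induce s).chromaticNumber = ⊤) :
    ∀ n : ℕ, Nonempty ((F n) ↪g (disjointUnionGraph N F).induce s) := by
  intro n
  by_cases hbig : ∀ k : ℕ, ∃ u : ↥s, k ≤ (Stmt14.clus F s u).ncard
  · exact Stmt14.embed_of_unbounded hcluster hbig n
  · exfalso
    push_neg at hbig
    obtain ⟨k, hk⟩ := hbig
    have hcol := Stmt14.colorable_of_bounded hcluster (fun u => le_of_lt (hk u))
    have hle := hcol.chromaticNumber_le
    rw [hs] at hle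
    simpa using hle
end

section
/- Let G be an infinite graph of infinite chromatic number in which the subgraph induced on the neighbourhood of every vertex has finite chromatic number, and let V₁ be a finite set of vertices of G. Then the graph obtained from G by deleting V₁ together with all neighbours of vertices in V₁ still has infinite chromatic number. -/
/-- Let `G` be an infinite graph of infinite chromatic number in
which the subgraph induced on every vertex neighbourhood has finite chromatic number,
and let `V₁` be a finite set of vertices. Then the subgraph induced on the complement
of `V₁ ∪ Γ(V₁)` still has infinite chromatic number. -/
theorem stmt_15 {V : Type*} [Infinite V] (G : SimpleGraph V)
    (hchrom : G.chromaticNumber = ⊤)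
    (hnbhd : ∀ v : V, (G.induce (G.neighborSet v)).chromaticNumber ≠ ⊤)
    (V₁ : Finset V) :
    (G.induce {v : V | v ∉ V₁ ∧ ∀ u ∈ V₁, ¬ G.Adj u v}).chromaticNumber = ⊤ := by
  classical
  by_contra hne
  obtain ⟨n₀, hc₀⟩ := SimpleGraph.chromaticNumber_ne_top_iff_exists.mp hne
  have hf : ∀ v : V, ∃ n, (G.induce (G.neighborSet v)).Colorable n := fun v =>
    SimpleGraph.chromaticNumber_ne_top_iff_exists.mp (hnbhd v)
  let c₀ := hc₀.some
  let f : V → ℕ := fun v => (hf v).choose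
  let cN : ∀ v, (G.induce (G.neighborSet v)).Coloring (Fin (f v)) :=
    fun v => ((hf v).choose_spec).some
  let C := Fin n₀ ⊕ ((Σ v : V₁, Fin (f ↑v)) ⊕ V₁)
  let col : V → C := fun v =>
    if h1 : v ∈ V₁ then Sum.inr (Sum.inr ⟨v, h1⟩)
    else if h2 : ∃ u ∈ V₁, G.Adj u v then
      Sum.inr (Sum.inl ⟨⟨h2.choose, h2.choose_spec.1⟩, cN h2.choose ⟨v, h2.choose_spec.2⟩⟩)
    else Sum.inl (c₀ ⟨v, h1, by push_neg at h2; exact h2⟩)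
  have hvalid : ∀ {v w : V}, G.Adj v w → col v ≠ col w := by
    intro v w hadj hEq
    dsimp only [col] at hEq
    split_ifs at hEq with h1 h2 h3 h4 h5 h6 <;> injection hEq with hEq2
    all_goals try (simp at hEq2; done)
    · injection hEq2 with h'
      injection h' with hv
      exact hadj.ne hv
    · injection hEq2 with h'
      injection h' with hfst hsnd
      have he : h4.choose = h6.choose := congrArg Subtype.val hfst
      have key : ∀ (a b : V) (ha : G.Adj a v) (hb : G.Adj b w),
          a = b → HEq (cN a ⟨v, ha⟩) (cN b ⟨w, hb⟩) → False := by
        rintro a b ha hb rfl hh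
        exact (cN a).valid (show (G.induce _).Adj ⟨v, ha⟩ ⟨w, hb⟩ from hadj) (eq_of_heq hh)
      exact key _ _ _ _ he hsnd
    · exact c₀.valid (show (G.induce _).Adj ⟨v, _⟩ ⟨w, _⟩ from hadj) hEq2
  have hcolorable : G.Colorable (Fintype.card C) :=
    (SimpleGraph.Coloring.mk col hvalid).colorable
  have hle := hcolorable.chromaticNumber_le
  rw [hchrom] at hle
  exact absurd (top_le_iff.mp hle) (by simp)
end

section
/- Let 𝒻 be a countable family of finite graphs with {χ(F) : F ∈ 𝒻} unbounded. Then 𝒻 is durable if and only if the disjoint union G_𝒻 of the members of 𝒻 is a witness of 𝒻's durability, i.e., every induced subgraph of G_𝒻 with infinite chromatic number contains every member of 𝒻 as an induced subgraph. -/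
/-- A graph `G` is a witness of the durability of the family `F`: `G` is infinite,
has infinite chromatic number, and every induced subgraph of `G` with infinite
chromatic number contains every member of the family as an induced subgraph. -/
def IsWitness (N : ℕ → ℕ) (F : ∀ n : ℕ, SimpleGraph (Fin (N n)))
    {V : Type} (G : SimpleGraph V) : Prop :=
  Infinite V ∧ G.chromaticNumber = ⊤ ∧
    ∀ s : Set V, (G.induce s).chromaticNumber = ⊤ →
      ∀ n : ℕ, Nonempty ((F n) ↪g G.induce s)

/-- A countable family of finite graphs is durable if it has some witness. -/
def IsDurable (N : ℕ → ℕ) (F : ∀ n : ℕ, SimpleGraph (Fin (N n))) : Prop :=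
  ∃ (V : Type) (G : SimpleGraph V), IsWitness N F G


open SimpleGraph Set

namespace Stmt16Aux

variable {V : Type} {G : SimpleGraph V}

/-- χ = ⊤ iff not colorable with any finite number of colors. -/
lemma chrom_top_iff (G : SimpleGraph V) :
    G.chromaticNumber = ⊤ ↔ ∀ n, ¬ G.Colorable n := by
  constructor
  · intro h n hc
    have := hc.chromaticNumber_le
    rw [h, top_le_iff] at this
    exact ENat.coe_ne_top n this
  · intro h
    by_contra hne
    obtain ⟨n, hn⟩ := SimpleGraph.chromaticNumber_ne_top_iff_exists.mp hne
    exact h n hn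

/-- Monotonicity of induced colorability under subset. -/
lemma colorable_induce_mono {s t : Set V} (h : s ⊆ t) {n : ℕ}
    (hc : (G.induce t).Colorable n) : (G.induce s).Colorable n := by
  refine hc.of_hom (SimpleGraph.Embedding.toHom ⟨⟨fun v => ⟨v.1, h v.2⟩, ?_⟩, ?_⟩)
  · rintro ⟨a, ha⟩ ⟨b, hb⟩ hab
    exact Subtype.ext (by simpa using hab)
  · intro a b
    rfl

lemma colorable_induce_union {s t : Set V} {m n : ℕ}
    (hs : (G.induce s).Colorable m) (ht : (G.induce t).Colorable n) :
    (G.induce (s ∪ t)).Colorable (m + n) := by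
  classical
  obtain ⟨cs⟩ := hs
  obtain ⟨ct⟩ := ht
  have C : (G.induce (s ∪ t)).Coloring (Fin m ⊕ Fin n) := by
    refine SimpleGraph.Coloring.mk
      (fun v => if hv : v.1 ∈ s then Sum.inl (cs ⟨v.1, hv⟩)
        else Sum.inr (ct ⟨v.1, v.2.resolve_left hv⟩)) ?_
    rintro ⟨a, ha⟩ ⟨b, hb⟩ hab
    dsimp only
    split_ifs with h1 h2 h2
    · intro hc
      exact cs.valid (by exact hab) (Sum.inl.inj hc)
    · simp
    · simp
    · intro hc
      exact ct.valid (by exact hab) (Sum.inr.inj hc)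
  simpa using C.colorable

/-- Singleton sets are 1-colorable. -/
lemma colorable_induce_singleton (v : V) : (G.induce {v}).Colorable 1 := by
  refine ⟨SimpleGraph.Coloring.mk (fun _ => 0) ?_⟩
  rintro ⟨a, ha⟩ ⟨b, hb⟩ hab
  rcases ha; rcases hb
  exact absurd hab (G.loopless.irrefl _)

/-- The closed neighborhood of a set. -/
def Ncl (G : SimpleGraph V) (T : Set V) : Set V := ⋃ v ∈ T, insert v (G.neighborSet v)

lemma mem_Ncl_of_mem {T : Set V} {v : V} (hv : v ∈ T) :
    insert v (G.neighborSet v) ⊆ Ncl G T := by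
  intro x hx
  exact Set.mem_biUnion hv hx

lemma colorable_induce_Ncl {X T : Set V} (hT : T.Finite)
    (hdom : ∀ v ∈ X, ∃ k, (G.induce (X ∩ G.neighborSet v)).Colorable k) (hTX : T ⊆ X) :
    ∃ k, (G.induce (X ∩ Ncl G T)).Colorable k := by
  revert hTX
  refine Set.Finite.induction_on _ hT (fun _ => ?_) (@fun a s ha hs ih hTX => ?_)
  · have h1 : X ∩ Ncl G (∅ : Set V) = ∅ := by simp [Ncl]
    rw [h1]
    exact ⟨0, SimpleGraph.Colorable.of_isEmpty (G := G.induce (∅ : Set V)) 0⟩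
  · obtain ⟨k1, hk1⟩ := ih ((Set.insert_subset_iff.mp hTX).2)
    obtain ⟨k2, hk2⟩ := hdom a (Set.insert_subset_iff.mp hTX).1
    refine ⟨(1 + k2) + k1, ?_⟩
    have hN : Ncl G (insert a s) = insert a (G.neighborSet a) ∪ Ncl G s := by
      simp [Ncl, Set.biUnion_insert]
    have hsubset : X ∩ Ncl G (insert a s) ⊆ (({a} : Set V) ∪ (X ∩ G.neighborSet a)) ∪ (X ∩ Ncl G s) := by
      rw [hN]
      rintro x ⟨hxX, hx⟩
      rcases hx with hx | hx
      · rcases hx with rfl | hx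
        · exact Or.inl (Or.inl rfl)
        · exact Or.inl (Or.inr ⟨hxX, hx⟩)
      · exact Or.inr ⟨hxX, hx⟩
    exact colorable_induce_mono hsubset
      (colorable_induce_union (colorable_induce_union (colorable_induce_singleton a) hk2) hk1)

/-- Removing a set with finitely-colorable intersection keeps infinite chromatic number. -/
lemma not_colorable_diff {X R : Set V}
    (hX : ∀ k, ¬ (G.induce X).Colorable k)
    (hR : ∃ k, (G.induce (X ∩ R)).Colorable k) :
    ∀ k, ¬ (G.induce (X \ R)).Colorable k := by
  intro k hk
  obtain ⟨k', hk'⟩ := hR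
  have hsub : X ⊆ (X \ R) ∪ (X ∩ R) := by
    intro x hx
    by_cases hxR : x ∈ R
    · exact Or.inr ⟨hx, hxR⟩
    · exact Or.inl ⟨hx, hxR⟩
  exact hX (k + k') (colorable_induce_mono hsub (colorable_induce_union hk hk'))

/-- If `G` has no infinite clique and infinite chromatic number, there is a set `X`
of infinite chromatic number in which every vertex has a neighborhood of finite
chromatic number. -/
lemma exists_terminal (hnc : ¬ ∃ f : ℕ → V, ∀ i j, i ≠ j → G.Adj (f i) (f j))
    (htop : ∀ k, ¬ G.Colorable k) :
    ∃ X : Set V, (∀ k, ¬ (G.induce X).Colorable k) ∧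
      ∀ v ∈ X, ∃ k, (G.induce (X ∩ G.neighborSet v)).Colorable k := by
  by_contra hterm
  push_neg at hterm
  have hbase : ∀ k, ¬ (G.induce Set.univ).Colorable k := fun k hk =>
    htop k (hk.of_hom G.induceUnivIso.symm.toEmbedding.toHom)
  let step : {X : Set V // ∀ k, ¬ (G.induce X).Colorable k} →
      {X : Set V // ∀ k, ¬ (G.induce X).Colorable k} := fun X =>
    ⟨X.1 ∩ G.neighborSet (hterm X.1 X.2).choose, ((hterm X.1 X.2).choose_spec).2⟩
  let S : ℕ → {X : Set V // ∀ k, ¬ (G.induce X).Colorable k} := fun n =>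
    Nat.rec ⟨Set.univ, hbase⟩ (fun _ ih => step ih) n
  let f : ℕ → V := fun n => (hterm (S n).1 (S n).2).choose
  have hmem : ∀ n, f n ∈ (S n).1 := fun n => (hterm (S n).1 (S n).2).choose_spec.1
  have hstep : ∀ n, (S (n + 1)).1 = (S n).1 ∩ G.neighborSet (f n) := fun n => rfl
  have hsub : ∀ n m, n ≤ m → (S m).1 ⊆ (S n).1 := by
    intro n m h
    induction m, h using Nat.le_induction with
    | base => exact subset_rfl
    | succ m hm ih =>
      rw [hstep m]
      exact (Set.inter_subset_left).trans ih
  have hadj : ∀ i j, i < j → G.Adj (f i) (f j) := by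
    intro i j hij
    have h1 : f j ∈ (S (i + 1)).1 := hsub (i + 1) j hij (hmem j)
    rw [hstep i] at h1
    exact h1.2
  refine hnc ⟨f, fun i j hij => ?_⟩
  rcases lt_or_gt_of_ne hij with h | h
  · exact hadj i j h
  · exact (hadj j i h).symm

/-- Greedy construction of pairwise non-adjacent induced copies. -/
lemma greedy {W : ℕ → Type} [∀ n, Finite (W n)] (H : ∀ n, SimpleGraph (W n))
    {X : Set V}
    (hX : ∀ k, ¬ (G.induce X).Colorable k)
    (hdom : ∀ v ∈ X, ∃ k, (G.induce (X ∩ G.neighborSet v)).Colorable k)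
    (hemb : ∀ Y : Set V, (∀ k, ¬ (G.induce Y).Colorable k) →
      ∀ n, Nonempty (H n ↪g G.induce Y)) :
    ∃ e : ∀ n, H n ↪g G,
      ∀ m n, m < n → ∀ a b, e m a ≠ e n b ∧ ¬ G.Adj (e m a) (e n b) := by
  have hY : ∀ T : Set V, T.Finite → T ⊆ X →
      ∀ k, ¬ (G.induce (X \ Ncl G T)).Colorable k :=
    fun T hf hs => not_colorable_diff hX (colorable_induce_Ncl hf hdom hs)
  let pick : ∀ (n : ℕ) (T : Set V), T.Finite → T ⊆ X →
      (H n ↪g G.induce (X \ Ncl G T)) :=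
    fun n T hf hs => (hemb _ (hY T hf hs) n).some
  let used : ℕ → {T : Set V // T.Finite ∧ T ⊆ X} := fun n => Nat.rec
    ⟨∅, Set.finite_empty, Set.empty_subset X⟩
    (fun n ih => ⟨ih.1 ∪ Set.range (fun a => ((pick n ih.1 ih.2.1 ih.2.2) a : V)),
      ih.2.1.union (Set.finite_range _),
      Set.union_subset ih.2.2
        (by rintro x ⟨a, rfl⟩; exact ((pick n ih.1 ih.2.1 ih.2.2) a).2.1)⟩) n
  let e : ∀ n, H n ↪g G := fun n =>
    (SimpleGraph.Embedding.induce _).comp (pick n (used n).1 (used n).2.1 (used n).2.2)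
  have he_mem : ∀ n a, (e n a : V) ∈ X \ Ncl G (used n).1 := fun n a =>
    ((pick n (used n).1 (used n).2.1 (used n).2.2) a).2
  have hrange : ∀ n a, (e n a : V) ∈ (used (n + 1)).1 := fun n a => Or.inr ⟨a, rfl⟩
  have hmono : ∀ m n, m ≤ n → (used m).1 ⊆ (used n).1 := by
    intro m n h
    induction n, h using Nat.le_induction with
    | base => exact subset_rfl
    | succ n hn ih => exact ih.trans Set.subset_union_left
  refine ⟨e, fun m n hmn a b => ?_⟩
  have h1 : (e m a : V) ∈ (used n).1 := hmono (m + 1) n hmn (hrange m a)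
  have h2 : (e n b : V) ∉ Ncl G (used n).1 := (he_mem n b).2
  constructor
  · intro hc
    exact h2 (mem_Ncl_of_mem h1 (by rw [← hc]; exact Set.mem_insert _ _))
  · intro hadj
    exact h2 (mem_Ncl_of_mem h1 (Set.mem_insert_of_mem _ hadj))

end Stmt16Aux

namespace Stmt16Dua

variable {N : ℕ → ℕ} {F : ∀ n : ℕ, SimpleGraph (Fin (N n))}

lemma dua_same {n : ℕ} {i j : Fin (N n)} :
    (disjointUnionGraph N F).Adj ⟨n, i⟩ ⟨n, j⟩ ↔ (F n).Adj i j := by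
  simp only [disjointUnionGraph, SimpleGraph.fromRel_adj]
  constructor
  · rintro ⟨hne, (⟨h, hadj⟩ | ⟨h, hadj⟩)⟩
    · exact hadj
    · exact hadj.symm
  · intro h
    refine ⟨?_, Or.inl ⟨trivial, h⟩⟩
    intro hc
    exact h.ne (eq_of_heq (Sigma.mk.inj_iff.mp hc).2)

lemma dua_fiber {a b : Σ n : ℕ, Fin (N n)} (h : (disjointUnionGraph N F).Adj a b) :
    a.1 = b.1 := by
  simp only [disjointUnionGraph, SimpleGraph.fromRel_adj] at h
  rcases h with ⟨-, ⟨h, -⟩ | ⟨h, -⟩⟩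
  exacts [h, h.symm]

/-- The canonical embedding of `F n` into the disjoint union. -/
def embFiber (N : ℕ → ℕ) (F : ∀ n : ℕ, SimpleGraph (Fin (N n))) (n : ℕ) :
    F n ↪g disjointUnionGraph N F :=
  ⟨⟨fun i => ⟨n, i⟩, fun i j h => eq_of_heq (Sigma.mk.inj_iff.mp h).2⟩,
    fun {i j} => dua_same⟩

lemma colorable_induce_dua {s : Set (Σ n : ℕ, Fin (N n))} {k : ℕ}
    (hcol : ∀ n, ((F n).induce {i | (⟨n, i⟩ : Σ n : ℕ, Fin (N n)) ∈ s}).Colorable k) :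
    ((disjointUnionGraph N F).induce s).Colorable k := by
  have c := fun n => (hcol n).some
  refine ⟨SimpleGraph.Coloring.mk (fun x => c x.1.1 ⟨x.1.2, x.2⟩) ?_⟩
  rintro ⟨⟨n, i⟩, hi⟩ ⟨⟨m, j⟩, hj⟩ hadj
  have hf : n = m := dua_fiber hadj
  subst hf
  have hij : (F n).Adj i j := dua_same.mp hadj
  exact (c n).valid hij

end Stmt16Dua

open Stmt16Aux Stmt16Dua

/-- A countable family of finite graphs with unbounded chromatic
numbers is durable if and only if the disjoint union of its members is a witness of
its durability. -/
theorem stmt_16 (N : ℕ → ℕ) (F : ∀ n : ℕ, SimpleGraph (Fin (N n)))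
    (hunbdd : ∀ k : ℕ, ∃ n, (k : ℕ∞) ≤ (F n).chromaticNumber) :
    IsDurable N F ↔ IsWitness N F (disjointUnionGraph N F) := by
  classical
  set GD := disjointUnionGraph N F with hGDdef
  have hNunb : ∀ k, ∃ n, k ≤ N n := by
    intro k
    obtain ⟨n, hn⟩ := hunbdd k
    have h2 : (F n).chromaticNumber ≤ (N n : ℕ∞) := by
      have h3 := (F n).colorable_of_fintype
      rw [Fintype.card_fin] at h3
      exact h3.chromaticNumber_le
    exact ⟨n, by exact_mod_cast hn.trans h2⟩
  have hInf : Infinite (Σ n : ℕ, Fin (N n)) := by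
    by_contra hfin
    rw [not_infinite_iff_finite] at hfin
    haveI := Fintype.ofFinite (Σ n : ℕ, Fin (N n))
    obtain ⟨n, hn⟩ := hNunb (Fintype.card (Σ n : ℕ, Fin (N n)) + 1)
    have hinj : Function.Injective (fun i : Fin (N n) => (⟨n, i⟩ : Σ n : ℕ, Fin (N n))) :=
      fun i j h => eq_of_heq (Sigma.mk.inj_iff.mp h).2
    have hle := Fintype.card_le_of_injective _ hinj
    rw [Fintype.card_fin] at hle
    omega
  have hchromD : GD.chromaticNumber = ⊤ := by
    rw [chrom_top_iff]
    intro k hk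
    obtain ⟨n, hn⟩ := hunbdd (k + 1)
    have h1 : (F n).Colorable k := hk.of_hom (embFiber N F n).toHom
    have h2 := hn.trans h1.chromaticNumber_le
    rw [Nat.cast_le] at h2
    omega
  constructor
  · rintro ⟨V, G, hVinf, hGtop, hwit⟩
    refine ⟨hInf, hchromD, ?_⟩
    intro s hs m
    have hstop : ∀ k, ¬ (GD.induce s).Colorable k := (chrom_top_iff _).mp hs
    set sn : ∀ n, Set (Fin (N n)) := fun n => {i | (⟨n, i⟩ : Σ n : ℕ, Fin (N n)) ∈ s}
      with hsndef
    by_cases hclique : ∃ f : ℕ → V, ∀ i j, i ≠ j → G.Adj (f i) (f j)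
    · -- clique case: every `F n` is complete
      obtain ⟨f, hf⟩ := hclique
      set K := Set.range f with hKdef
      have hKtop : (G.induce K).chromaticNumber = ⊤ := by
        rw [chrom_top_iff]
        rintro k ⟨C⟩
        have hCinj : Function.Injective (fun i : ℕ => C ⟨f i, Set.mem_range_self i⟩) := by
          intro i j h
          by_contra hne
          exact C.valid (by exact hf i j hne) h
        obtain ⟨i, j, hne, heq⟩ :=
          Finite.exists_ne_map_eq_of_infinite (fun i : ℕ => C ⟨f i, Set.mem_range_self i⟩)
        exact hne (hCinj heq)
      have hcompl : ∀ n, ∀ i j : Fin (N n), i ≠ j → (F n).Adj i j := by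
        intro n i j hij
        obtain ⟨emb⟩ := hwit K hKtop n
        have h1 : emb i ≠ emb j := fun h => hij (emb.injective h)
        obtain ⟨i', hi'⟩ := (emb i).2
        obtain ⟨j', hj'⟩ := (emb j).2
        have hne' : i' ≠ j' := by
          rintro rfl
          exact h1 (Subtype.ext (hi' ▸ hj' ▸ rfl))
        have hGadj : G.Adj ((emb i : ↥K) : V) ((emb j : ↥K) : V) := by
          rw [← hi', ← hj']
          exact hf i' j' hne'
        exact emb.map_rel_iff.mp (by exact hGadj)
      have hex : ∃ n, ¬ ((F n).induce (sn n)).Colorable (N m) := by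
        by_contra h
        push_neg at h
        exact hstop (N m) (colorable_induce_dua h)
      obtain ⟨n, hn⟩ := hex
      haveI : Fintype ↥(sn n) := Fintype.ofFinite _
      have hcard : N m ≤ Fintype.card ↥(sn n) := by
        by_contra hlt
        push_neg at hlt
        exact hn (((F n).induce (sn n)).colorable_of_fintype.mono (by omega))
      obtain ⟨inj⟩ : Nonempty (Fin (N m) ↪ ↥(sn n)) :=
        Function.Embedding.nonempty_of_card_le (by simpa using hcard)
      refine ⟨⟨⟨fun i => ⟨⟨n, ((inj i : ↥(sn n)) : Fin (N n))⟩, (inj i).2⟩, ?_⟩, ?_⟩⟩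
      · intro i j h
        apply inj.injective
        apply Subtype.ext
        have h2 := congrArg Subtype.val h
        exact eq_of_heq (Sigma.mk.inj_iff.mp h2).2
      · intro i j
        constructor
        · intro h
          have hab : (F n).Adj ((inj i : ↥(sn n)) : Fin (N n)) ((inj j : ↥(sn n)) : Fin (N n)) :=
            dua_same.mp h
          have hne : i ≠ j := by
            rintro rfl
            exact hab.ne rfl
          exact hcompl m i j hne
        · intro h
          have hne : (inj i : ↥(sn n)) ≠ inj j := fun hc => h.ne (inj.injective hc)
          exact dua_same.mpr (hcompl n _ _ (fun hc => hne (Subtype.ext hc)))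
    · -- no infinite clique: embed the whole induced subgraph greedily
      obtain ⟨X, hXtop, hdom⟩ := exists_terminal hclique ((chrom_top_iff G).mp hGtop)
      have hemb : ∀ Y : Set V, (∀ k, ¬ (G.induce Y).Colorable k) →
          ∀ n, Nonempty ((F n).induce (sn n) ↪g G.induce Y) := by
        intro Y hY n
        obtain ⟨embF⟩ := hwit Y ((chrom_top_iff _).mpr hY) n
        exact ⟨embF.comp (SimpleGraph.Embedding.induce (sn n))⟩
      obtain ⟨e, hsep⟩ := greedy (fun n => (F n).induce (sn n)) hXtop hdom hemb
      let Ef : ↥s → V := fun x => e x.1.1 ⟨x.1.2, x.2⟩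
      have hEinj : Function.Injective Ef := by
        rintro ⟨⟨n, i⟩, hi⟩ ⟨⟨m', j⟩, hj⟩ h
        rcases eq_or_ne n m' with rfl | hnm
        · have h2 := (e n).injective h
          have h3 : i = j := congrArg Subtype.val h2
          apply Subtype.ext
          exact congrArg (Sigma.mk n) h3
        · exfalso
          rcases lt_or_gt_of_ne hnm with hlt | hlt
          · exact (hsep n m' hlt _ _).1 h
          · exact (hsep m' n hlt _ _).1 h.symm
      have hrel : ∀ x y : ↥s, G.Adj (Ef x) (Ef y) ↔ (GD.induce s).Adj x y := by
        rintro ⟨⟨n, i⟩, hi⟩ ⟨⟨m', j⟩, hj⟩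
        rcases eq_or_ne n m' with rfl | hnm
        · have h1 : G.Adj (Ef ⟨⟨n, i⟩, hi⟩) (Ef ⟨⟨n, j⟩, hj⟩) ↔ (F n).Adj i j :=
            (e n).map_rel_iff
          have h2 : (GD.induce s).Adj ⟨⟨n, i⟩, hi⟩ ⟨⟨n, j⟩, hj⟩ ↔ (F n).Adj i j :=
            dua_same
          rw [h1, h2]
        · constructor
          · intro h
            exfalso
            rcases lt_or_gt_of_ne hnm with hlt | hlt
            · exact (hsep n m' hlt _ _).2 h
            · exact (hsep m' n hlt _ _).2 h.symm
          · intro h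
            exact absurd (dua_fiber h) hnm
      set s' := Set.range Ef with hs'def
      have hiso : (GD.induce s) ≃g (G.induce s') := by
        refine ⟨Equiv.ofInjective Ef hEinj, ?_⟩
        intro x y
        exact hrel x y
      have hs'top : (G.induce s').chromaticNumber = ⊤ := by
        rw [chrom_top_iff]
        intro k hk
        exact hstop k (hk.of_hom hiso.toEmbedding.toHom)
      obtain ⟨embF⟩ := hwit s' hs'top m
      exact ⟨(hiso.symm.toEmbedding).comp embF⟩
  · intro h
    exact ⟨_, _, h⟩
end

section
/- Let S be a B_h-set of integers with difference set D, let 2 ≤ ℓ ≤ h, and suppose d₁, …, d_ℓ ∈ D satisfy d₁ + ⋯ + d_s = d_{s+1} + ⋯ + d_ℓ for some 1 ≤ s ≤ ℓ - 1. Form the multigraph M on vertex set S with one edge eᵢ joining the (unique) pair of elements of S at distance dᵢ, for each i. Then the edge set of M can be decomposed into edge-disjoint circuits; in particular, if ℓ is odd, the simple graph obtained from M by deleting duplicate edges contains an odd cycle. -/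
/-- A set of integers is a `Bₕ`-set if all sums of `h` elements of `S`
(with repetition allowed, listed in nondecreasing order) are pairwise distinct:
two monotone `h`-tuples from `S` with the same sum must be equal. -/
def IsBhSet (h : ℕ) (S : Set ℤ) : Prop :=
  ∀ a b : Fin h → ℤ, (∀ i, a i ∈ S) → (∀ i, b i ∈ S) → Monotone a → Monotone b →
    (∑ i, a i) = (∑ i, b i) → a = b

section AuxLemmas

lemma exists_perm_comp {n : ℕ} (a b : Fin n → ℤ)
    (hc : ∀ z : ℤ, Fintype.card {i : Fin n // a i = z} = Fintype.card {i : Fin n // b i = z}) :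
    ∃ π : Equiv.Perm (Fin n), ∀ i, a i = b (π i) := by
  classical
  let E : ∀ z : ℤ, {i : Fin n // a i = z} ≃ {i : Fin n // b i = z} :=
    fun z => Fintype.equivOfCardEq (hc z)
  let f : Fin n → Fin n := fun i => ((E (a i)) ⟨i, rfl⟩ : {j // b j = a i}).val
  have hf : ∀ i, b (f i) = a i := fun i => ((E (a i)) ⟨i, rfl⟩).2
  have hinj : Function.Injective f := by
    have key : ∀ (z1 z2 : ℤ) (_ : z1 = z2) (u : {k // a k = z1}) (w : {k // a k = z2}),
        ((E z1 u : {j // b j = z1}) : Fin n) = ((E z2 w : {j // b j = z2}) : Fin n) →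
        (u : Fin n) = (w : Fin n) := by
      rintro z1 z2 rfl u w hjj
      exact congrArg Subtype.val ((E z1).injective (Subtype.ext hjj))
    intro i j hij
    have hz : a i = a j := by rw [← hf i, ← hf j, hij]
    exact key _ _ hz ⟨i, rfl⟩ ⟨j, rfl⟩ hij
  exact ⟨Equiv.ofBijective f (Finite.injective_iff_bijective.mp hinj), fun i => (hf i).symm⟩

lemma odd_cycle_extract {α : Type*} (Adj : α → α → Prop) (hirr : ∀ u, ¬ Adj u u) :
    ∀ m : ℕ, Odd m → ∀ w : ZMod m → α, (∀ j, Adj (w j) (w (j + 1))) →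
    ∃ m' : ℕ, 3 ≤ m' ∧ Odd m' ∧ ∃ v : ZMod m' → α, Function.Injective v ∧
      ∀ j, Adj (v j) (v (j + 1)) := by
  intro m
  induction m using Nat.strong_induction_on with
  | _ m IH =>
    intro hm w hw
    have hm0 : m ≠ 0 := by rintro rfl; have := Nat.odd_iff.mp hm; omega
    haveI : NeZero m := ⟨hm0⟩
    have hm1 : m ≠ 1 := by
      rintro rfl
      have : w (0 + 1) = w 0 := congrArg w (Subsingleton.elim _ _)
      exact hirr (w 0) (this ▸ hw 0)
    by_cases hwin : Function.Injective w
    · refine ⟨m, ?_, hm, w, hwin, hw⟩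
      obtain ⟨k, rfl⟩ := hm; omega
    · -- find a repeated vertex
      simp only [Function.Injective, not_forall] at hwin
      obtain ⟨j1, j2, heq, hne⟩ := hwin
      set w' : ZMod m → α := fun j => w (j1 + j) with hw'def
      have hw' : ∀ j, Adj (w' j) (w' (j + 1)) := by
        intro j; simpa [hw'def, add_assoc] using hw (j1 + j)
      set t : ZMod m := j2 - j1 with htdef
      have ht : t ≠ 0 := sub_ne_zero.mpr (Ne.symm hne)
      have hper : w' ((t.val : ℕ) : ZMod m) = w' ((0 : ℕ) : ZMod m) := by
        have : ((t.val : ℕ) : ZMod m) = t := ZMod.natCast_rightInverse t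
        simp only [hw'def, this, htdef, Nat.cast_zero]
        rw [ZMod.natCast_zmod_val, add_sub_cancel, add_zero]
        exact heq.symm
      set k : ℕ := t.val with hkdef
      have hk0 : 0 < k := by
        rcases Nat.eq_zero_or_pos k with hzz | hzz
        · exact absurd ((ZMod.val_eq_zero t).mp hzz) ht
        · exact hzz
      have hkm : k < m := ZMod.val_lt t
      -- general sub-walk step
      have step : ∀ o m₁ : ℕ, 0 < m₁ → m₁ < m → Odd m₁ →
          w' (((o + m₁ : ℕ)) : ZMod m) = w' ((o : ℕ) : ZMod m) →
          ∃ m' : ℕ, 3 ≤ m' ∧ Odd m' ∧ ∃ v : ZMod m' → α, Function.Injective v ∧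
            ∀ j, Adj (v j) (v (j + 1)) := by
        intro o m₁ hm₁0 hm₁m hm₁odd hclose
        haveI : NeZero m₁ := ⟨hm₁0.ne'⟩
        set u : ZMod m₁ → α := fun j => w' (((o + j.val : ℕ)) : ZMod m) with hudef
        have hu : ∀ j, Adj (u j) (u (j + 1)) := by
          intro j
          have hvlt : j.val < m₁ := ZMod.val_lt j
          have hval : (j + 1).val = (j.val + 1) % m₁ := by
            rw [ZMod.val_add, ZMod.val_one_eq_one_mod]
            simp [Nat.add_mod]
          have hgoal : u (j + 1) = w' (((o + j.val + 1 : ℕ)) : ZMod m) := by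
            rcases Nat.lt_or_ge (j.val + 1) m₁ with hlt | hge
            · simp only [hudef, hval, Nat.mod_eq_of_lt hlt]
              norm_num [add_assoc]
            · have : j.val + 1 = m₁ := by omega
              simp only [hudef, hval, this, Nat.mod_self]
              rw [add_zero]
              rw [show o + j.val + 1 = o + m₁ by omega]
              exact hclose.symm
          have hcast : ((o + j.val + 1 : ℕ) : ZMod m) = ((o + j.val : ℕ) : ZMod m) + 1 := by
            push_cast; ring
          rw [hgoal, hcast]
          exact hw' _
        exact IH m₁ hm₁m hm₁odd u hu
      rcases Nat.even_or_odd k with hke | hko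
      · -- m - k is odd
        have hodd : Odd (m - k) := by
          obtain ⟨m2, hm2⟩ := hm; obtain ⟨k2, hk2⟩ := hke
          exact ⟨m2 - k2, by omega⟩
        refine step k (m - k) (by omega) (by omega) hodd ?_
        have h1 : ((k + (m - k) : ℕ) : ZMod m) = ((0 : ℕ) : ZMod m) := by
          rw [show k + (m - k) = m by omega]; simp
        rw [h1]
        exact hper.symm
      · refine step 0 k hk0 hkm hko ?_
        simpa using hper

lemma walk_of_cycle {n : ℕ} (x y a b : Fin n → ℤ) (π : Equiv.Perm (Fin n))
    (hπ : ∀ i, a i = b (π i))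
    (hpair : ∀ i, ({x i, y i} : Set ℤ) = {b i, a i})
    (c : Fin n) (hc : π c ≠ c) :
    ∃ e : ZMod (orderOf (π.cycleOf c)) → Fin n, ∃ v : ZMod (orderOf (π.cycleOf c)) → ℤ,
      Function.Injective e ∧ (∀ i, π.SameCycle c i ↔ ∃ j, e j = i) ∧
      ∀ j, ({x (e j), y (e j)} : Set ℤ) = {v j, v (j + 1)} := by
  classical
  set m := orderOf (π.cycleOf c) with hmdef
  have hm : 0 < m := orderOf_pos _
  haveI : NeZero m := ⟨hm.ne'⟩
  have h1 : (π ^ m) c = c := by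
    rw [← Equiv.Perm.cycleOf_pow_apply_self, hmdef, pow_orderOf_eq_one]; rfl
  have hq : ∀ q, (π ^ (m * q)) c = c := by
    intro q
    induction q with
    | zero => simp
    | succ q ih => rw [Nat.mul_succ, pow_add, Equiv.Perm.mul_apply, h1, ih]
  have hmod : ∀ nn, (π ^ (nn % m)) c = (π ^ nn) c := by
    intro nn
    conv_rhs => rw [← Nat.mod_add_div nn m]
    rw [pow_add, Equiv.Perm.mul_apply, hq]
  set e : ZMod m → Fin n := fun j => (π ^ j.val) c with hedef
  have hcx : (π.cycleOf c) c ≠ c := by rw [Equiv.Perm.cycleOf_apply_self]; exact hc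
  have hcyc : (π.cycleOf c).IsCycle := Equiv.Perm.isCycle_cycleOf π hc
  have claim : ∀ r1 r2 : ℕ, r1 ≤ r2 → r2 < m → (π ^ r1) c = (π ^ r2) c → r1 = r2 := by
    intro r1 r2 h12 h2m hpow
    have h2 : (π ^ r1) ((π ^ (r2 - r1)) c) = (π ^ r1) c := by
      rw [← Equiv.Perm.mul_apply, ← pow_add, show r1 + (r2 - r1) = r2 by omega, hpow]
    have h3 : (π ^ (r2 - r1)) c = c := (Equiv.injective _) h2
    have h4 : ((π.cycleOf c) ^ (r2 - r1)) c = c := by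
      rw [Equiv.Perm.cycleOf_pow_apply_self]; exact h3
    have h5 : (π.cycleOf c) ^ (r2 - r1) = 1 := (hcyc.pow_eq_one_iff' hcx).mpr h4
    have h6 : m ∣ (r2 - r1) := orderOf_dvd_of_pow_eq_one h5
    rcases Nat.eq_zero_or_pos (r2 - r1) with h0 | h0
    · omega
    · exact absurd (Nat.le_of_dvd h0 h6) (by omega)
  have einj : Function.Injective e := by
    intro j1 j2 hj
    apply ZMod.val_injective
    rcases le_total j1.val j2.val with hle | hle
    · exact claim _ _ hle (ZMod.val_lt j2) hj
    · exact (claim _ _ hle (ZMod.val_lt j1) hj.symm).symm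
  have hstep : ∀ j, e (j + 1) = π (e j) := by
    intro j
    have hval : (j + 1).val = (j.val + 1) % m := by
      rw [ZMod.val_add, ZMod.val_one_eq_one_mod]
      simp [Nat.add_mod]
    show (π ^ (j + 1).val) c = π ((π ^ j.val) c)
    rw [hval, hmod, pow_succ', Equiv.Perm.mul_apply]
  refine ⟨e, fun j => b (e j), einj, ?_, ?_⟩
  · intro i
    constructor
    · intro hsc
      obtain ⟨k, hk, hki⟩ := hsc.exists_pow_eq'
      refine ⟨(k : ZMod m), ?_⟩
      show (π ^ ((k : ZMod m)).val) c = i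
      rw [ZMod.val_natCast, hmod, hki]
    · rintro ⟨j, rfl⟩
      exact ⟨(j.val : ℤ), by rw [zpow_natCast]⟩
  · intro j
    have hv : b (e (j + 1)) = a (e j) := by rw [hstep, ← hπ]
    show ({x (e j), y (e j)} : Set ℤ) = {b (e j), b (e (j + 1))}
    rw [hv]
    exact hpair (e j)

lemma card_filter_fin (n : ℕ) (P : ℕ → Prop) [DecidablePred P] :
    (Finset.univ.filter fun i : Fin n => P i.val).card = ((Finset.range n).filter P).card := by
  rw [Finset.card_filter, Finset.card_filter]
  exact Fin.sum_univ_eq_sum_range (fun nn => if P nn then 1 else 0) n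

lemma multiset_exists_odd {s : Multiset ℕ} (hs : Odd s.sum) : ∃ a ∈ s, Odd a := by
  by_contra hc
  push_neg at hc
  have key : ∀ t : Multiset ℕ, (∀ a ∈ t, Even a) → Even t.sum := by
    intro t
    induction t using Multiset.induction_on with
    | empty => intro _; simp
    | cons a t ih =>
        intro hall
        rw [Multiset.sum_cons]
        exact (hall _ (Multiset.mem_cons_self _ _)).add (ih fun b hb => hall b (Multiset.mem_cons_of_mem hb))
  exact (Nat.not_odd_iff_even.mpr (key s fun a ha => Nat.not_odd_iff_even.mp (hc a ha))) hs

end AuxLemmas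

/-- **Cycle fact.** Let `S` be a `Bₕ`-set, let `2 ≤ ℓ ≤ h`, and let
`d₁, …, d_ℓ` be differences of elements of `S`, say `dᵢ = yᵢ - xᵢ` with
`xᵢ < yᵢ` both in `S`, such that `d₁ + ⋯ + d_s = d_{s+1} + ⋯ + d_ℓ` for some
`1 ≤ s ≤ ℓ - 1`. Consider the multigraph on `S` with one edge `eᵢ` joining `xᵢ` to
`yᵢ` for each `i`. Then:
* the edge set can be partitioned into classes, each of which can be arranged into a
  closed walk traversing each of its edges exactly once (a circuit); and
* if `ℓ` is odd, then the underlying simple graph contains an odd cycle: there are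
  `m ≥ 3` with `m` odd and distinct vertices `v 0, …, v (m-1)` (cyclically) such that
  each consecutive pair is joined by one of the edges. -/
theorem stmt_18 (h ℓ : ℕ) (hℓ2 : 2 ≤ ℓ) (hℓh : ℓ ≤ h)
    (S : Set ℤ) (hS : IsBhSet h S)
    (d x y : Fin ℓ → ℤ)
    (hxy : ∀ i, x i ∈ S ∧ y i ∈ S ∧ x i < y i ∧ y i - x i = d i)
    (s : ℕ) (hs1 : 1 ≤ s) (hs2 : s ≤ ℓ - 1)
    (hbal : (∑ i : Fin ℓ, if (i : ℕ) < s then d i else 0) =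
      (∑ i : Fin ℓ, if s ≤ (i : ℕ) then d i else 0)) :
    (∃ part : Fin ℓ → Fin ℓ, ∀ c : Fin ℓ, (∃ i, part i = c) →
      ∃ (m : ℕ), 0 < m ∧ ∃ (e : ZMod m → Fin ℓ) (v : ZMod m → ℤ),
        Function.Injective e ∧ (∀ i : Fin ℓ, part i = c ↔ ∃ j, e j = i) ∧
        (∀ j : ZMod m, ({x (e j), y (e j)} : Set ℤ) = {v j, v (j + 1)})) ∧
    (Odd ℓ → ∃ m : ℕ, 3 ≤ m ∧ Odd m ∧ ∃ v : ZMod m → ℤ, Function.Injective v ∧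
      ∀ j : ZMod m, ∃ i : Fin ℓ, ({x i, y i} : Set ℤ) = {v j, v (j + 1)}) := by
  classical
  have hxS : ∀ i, x i ∈ S := fun i => (hxy i).1
  have hyS : ∀ i, y i ∈ S := fun i => (hxy i).2.1
  have hlt : ∀ i, x i < y i := fun i => (hxy i).2.2.1
  have hd : ∀ i, y i - x i = d i := fun i => (hxy i).2.2.2
  have hi₀ : (0 : ℕ) < ℓ := by omega
  set i₀ : Fin ℓ := ⟨0, hi₀⟩ with hi₀def
  set p : ℤ := x i₀ with hpdef
  set a : Fin ℓ → ℤ := fun i => if (i : ℕ) < s then y i else x i with hadef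
  set b : Fin ℓ → ℤ := fun i => if (i : ℕ) < s then x i else y i with hbdef
  have hpair : ∀ i, ({x i, y i} : Set ℤ) = {b i, a i} := by
    intro i
    by_cases hi : (i : ℕ) < s <;> simp [hadef, hbdef, hi, Set.pair_comm]
  have hsum : ∑ i, a i = ∑ i, b i := by
    have h1 : ∀ i : Fin ℓ, a i - b i =
        (if (i : ℕ) < s then d i else 0) - (if s ≤ (i : ℕ) then d i else 0) := by
      intro i
      by_cases hi : (i : ℕ) < s
      · simp only [hadef, hbdef, if_pos hi, if_neg (show ¬ s ≤ (i : ℕ) by omega), sub_zero]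
        linarith [hd i]
      · simp only [hadef, hbdef, if_neg hi, if_pos (show s ≤ (i : ℕ) by omega), zero_sub]
        linarith [hd i]
    have h2 : ∑ i, (a i - b i) = 0 := by
      rw [Finset.sum_congr rfl (fun i _ => h1 i), Finset.sum_sub_distrib, hbal, sub_self]
    rw [Finset.sum_sub_distrib] at h2
    linarith
  set g1 : ℕ → ℤ := fun n => if hn : n < ℓ then a ⟨n, hn⟩ else p with hg1
  set g2 : ℕ → ℤ := fun n => if hn : n < ℓ then b ⟨n, hn⟩ else p with hg2
  have hg1mem : ∀ n, g1 n ∈ S := by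
    intro n
    simp only [hg1]
    split_ifs with h1
    · simp only [hadef]; split_ifs; exacts [hyS _, hxS _]
    · exact hxS i₀
  have hg2mem : ∀ n, g2 n ∈ S := by
    intro n
    simp only [hg2]
    split_ifs with h1
    · simp only [hbdef]; split_ifs; exacts [hxS _, hyS _]
    · exact hxS i₀
  set A : Fin h → ℤ := fun i => g1 i.val with hAdef
  set B : Fin h → ℤ := fun i => g2 i.val with hBdef
  have hrange : ∀ gg : ℕ → ℤ, ∑ n ∈ Finset.range h, gg n =
      ∑ n ∈ Finset.range ℓ, gg n + ∑ n ∈ Finset.Ico ℓ h, gg n := by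
    intro gg
    rw [Finset.range_eq_Ico, Finset.range_eq_Ico]
    exact (Finset.sum_Ico_consecutive gg (Nat.zero_le ℓ) hℓh).symm
  have hpartsum : ∀ (gg : ℕ → ℤ) (f : Fin ℓ → ℤ),
      (∀ i : Fin ℓ, gg i.val = f i) → ∑ n ∈ Finset.range ℓ, gg n = ∑ i, f i := by
    intro gg f hgf
    rw [← Fin.sum_univ_eq_sum_range gg ℓ]
    exact Finset.sum_congr rfl fun i _ => hgf i
  have hg1a : ∀ i : Fin ℓ, g1 i.val = a i := by
    intro i; simp only [hg1]; rw [dif_pos i.isLt]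
  have hg2b : ∀ i : Fin ℓ, g2 i.val = b i := by
    intro i; simp only [hg2]; rw [dif_pos i.isLt]
  have hsumAB : ∑ i, A i = ∑ i, B i := by
    simp only [hAdef, hBdef]
    rw [Fin.sum_univ_eq_sum_range g1 h, Fin.sum_univ_eq_sum_range g2 h, hrange g1, hrange g2,
      hpartsum g1 a hg1a, hpartsum g2 b hg2b, hsum]
    congr 1
    refine Finset.sum_congr rfl fun n hn => ?_
    have hℓn : ¬ n < ℓ := by have := (Finset.mem_Ico.mp hn).1; omega
    simp only [hg1, hg2, dif_neg hℓn]
  have htup : A ∘ (Tuple.sort A) = B ∘ (Tuple.sort B) := by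
    apply hS
    · intro i; simp only [Function.comp, hAdef]; exact hg1mem _
    · intro i; simp only [Function.comp, hBdef]; exact hg2mem _
    · exact Tuple.monotone_sort A
    · exact Tuple.monotone_sort B
    · simp only [Function.comp]
      rw [Equiv.sum_comp (Tuple.sort A) A, Equiv.sum_comp (Tuple.sort B) B]
      exact hsumAB
  set τ : Equiv.Perm (Fin h) := (Tuple.sort A).symm.trans (Tuple.sort B) with hτdef
  have hAB : ∀ i, A i = B (τ i) := by
    intro i
    have h1 := congrFun htup ((Tuple.sort A).symm i)
    simpa [Function.comp, hτdef] using h1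
  have fibh : ∀ z : ℤ, (Finset.univ.filter fun i : Fin h => A i = z).card =
      (Finset.univ.filter fun i : Fin h => B i = z).card := by
    intro z
    rw [← Fintype.card_subtype, ← Fintype.card_subtype]
    exact Fintype.card_congr (Equiv.subtypeEquiv τ fun i => by rw [hAB i])
  have chain : ∀ (gg : ℕ → ℤ) (z : ℤ), (∀ n, ℓ ≤ n → gg n = p) →
      ((Finset.range h).filter fun nn => gg nn = z).card
        = ((Finset.range ℓ).filter fun nn => gg nn = z).card + (if p = z then h - ℓ else 0) := by
    intro gg z hpad
    rw [Finset.range_eq_Ico, ← Finset.Ico_union_Ico_eq_Ico (Nat.zero_le ℓ) hℓh,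
      Finset.filter_union,
      Finset.card_union_of_disjoint
        (Finset.disjoint_filter_filter (Finset.Ico_disjoint_Ico_consecutive 0 ℓ h)),
      ← Finset.range_eq_Ico]
    congr 1
    have h1 : (Finset.Ico ℓ h).filter (fun nn => gg nn = z)
        = (Finset.Ico ℓ h).filter (fun _ => p = z) :=
      Finset.filter_congr fun n hn => by rw [hpad n (Finset.mem_Ico.mp hn).1]
    rw [h1, Finset.filter_const]
    split_ifs <;> simp [Nat.card_Ico]
  have fibl : ∀ z : ℤ, Fintype.card {i : Fin ℓ // a i = z} =
      Fintype.card {i : Fin ℓ // b i = z} := by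
    intro z
    rw [Fintype.card_subtype, Fintype.card_subtype]
    have h1 := fibh z
    have tA : (Finset.univ.filter fun i : Fin h => A i = z).card
        = (Finset.univ.filter fun i : Fin ℓ => a i = z).card + (if p = z then h - ℓ else 0) := by
      have e0 : (Finset.univ.filter fun i : Fin h => A i = z).card
          = ((Finset.range h).filter fun nn => g1 nn = z).card := by
        simp only [hAdef]; exact card_filter_fin h (fun nn => g1 nn = z)
      have e1 := chain g1 z (fun n hn => by simp only [hg1]; rw [dif_neg (by omega)])
      have e2 : ((Finset.range ℓ).filter fun nn => g1 nn = z).card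
          = (Finset.univ.filter fun i : Fin ℓ => a i = z).card := by
        rw [← card_filter_fin ℓ (fun nn => g1 nn = z)]
        congr 1
        exact Finset.filter_congr fun i _ => by rw [hg1a i]
      rw [e0, e1, e2]
    have tB : (Finset.univ.filter fun i : Fin h => B i = z).card
        = (Finset.univ.filter fun i : Fin ℓ => b i = z).card + (if p = z then h - ℓ else 0) := by
      have e0 : (Finset.univ.filter fun i : Fin h => B i = z).card
          = ((Finset.range h).filter fun nn => g2 nn = z).card := by
        simp only [hBdef]; exact card_filter_fin h (fun nn => g2 nn = z)
      have e1 := chain g2 z (fun n hn => by simp only [hg2]; rw [dif_neg (by omega)])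
      have e2 : ((Finset.range ℓ).filter fun nn => g2 nn = z).card
          = (Finset.univ.filter fun i : Fin ℓ => b i = z).card := by
        rw [← card_filter_fin ℓ (fun nn => g2 nn = z)]
        congr 1
        exact Finset.filter_congr fun i _ => by rw [hg2b i]
      rw [e0, e1, e2]
    rw [tA, tB] at h1
    omega
  obtain ⟨π, hπ⟩ := exists_perm_comp a b fibl
  have hπfix : ∀ i, π i ≠ i := by
    intro i hfix
    have h1 := hπ i
    rw [hfix] at h1
    have h2 := hlt i
    simp only [hadef, hbdef] at h1
    by_cases hi : (i : ℕ) < s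
    · rw [if_pos hi, if_pos hi] at h1; omega
    · rw [if_neg hi, if_neg hi] at h1; omega
  set part : Fin ℓ → Fin ℓ := fun i =>
    (Finset.univ.filter fun j => π.SameCycle i j).min'
      ⟨i, Finset.mem_filter.mpr ⟨Finset.mem_univ i, Equiv.Perm.SameCycle.refl π i⟩⟩ with hpartdef
  have hpartmem : ∀ i, π.SameCycle i (part i) := by
    intro i
    have h1 := Finset.min'_mem (Finset.univ.filter fun j => π.SameCycle i j)
      ⟨i, Finset.mem_filter.mpr ⟨Finset.mem_univ i, Equiv.Perm.SameCycle.refl π i⟩⟩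
    exact (Finset.mem_filter.mp h1).2
  have hpartcongr : ∀ i j, π.SameCycle i j → part i = part j := by
    intro i j hij
    have hfilter : (Finset.univ.filter fun k => π.SameCycle i k)
        = (Finset.univ.filter fun k => π.SameCycle j k) := by
      ext k
      simp only [Finset.mem_filter, Finset.mem_univ, true_and]
      exact ⟨fun hh => hij.symm.trans hh, fun hh => hij.trans hh⟩
    simp only [hpartdef]
    apply le_antisymm
    · exact Finset.min'_le _ _ (by rw [hfilter]; exact Finset.min'_mem _ _)
    · exact Finset.min'_le _ _ (by rw [← hfilter]; exact Finset.min'_mem _ _)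
  constructor
  · refine ⟨part, ?_⟩
    rintro c ⟨iw, hiw⟩
    have hciw : π.SameCycle c iw := by
      have h1 : π.SameCycle iw c := hiw ▸ hpartmem iw
      exact h1.symm
    have hpc : part c = c := by
      rw [hpartcongr c iw hciw, hiw]
    have key : ∀ i, part i = c ↔ π.SameCycle c i := by
      intro i
      constructor
      · intro hh
        have h1 := hpartmem i
        rw [hh] at h1
        exact h1.symm
      · intro hh
        rw [hpartcongr i c hh.symm, hpc]
    obtain ⟨e, v, einj, ecov, eedge⟩ := walk_of_cycle x y a b π hπ hpair c (hπfix c)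
    exact ⟨orderOf (π.cycleOf c), orderOf_pos _, e, v, einj,
      fun i => (key i).trans (ecov i), eedge⟩
  · intro hodd
    have hirr : ∀ u : ℤ, ¬ ∃ i : Fin ℓ, ({x i, y i} : Set ℤ) = {u, u} := by
      rintro u ⟨i, hi⟩
      have hxu : x i = u := by
        have h1 : x i ∈ ({u, u} : Set ℤ) := by rw [← hi]; exact Set.mem_insert _ _
        simpa using h1
      have hyu : y i = u := by
        have h1 : y i ∈ ({u, u} : Set ℤ) := by
          rw [← hi]; exact Set.mem_insert_of_mem _ rfl
        simpa using h1
      have := hlt i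
      omega
    have hsupp : π.support = Finset.univ := by
      ext i
      simp [Equiv.Perm.mem_support, hπfix i]
    have hct : π.cycleType.sum = ℓ := by
      rw [Equiv.Perm.sum_cycleType, hsupp]
      simp
    obtain ⟨mc, hmc_mem, hmc_odd⟩ := multiset_exists_odd (s := π.cycleType) (by rw [hct]; exact hodd)
    rw [Equiv.Perm.cycleType_def] at hmc_mem
    obtain ⟨σ, hσmem, hσcard⟩ := Multiset.mem_map.mp hmc_mem
    have hσmem' : σ ∈ π.cycleFactorsFinset := hσmem
    have hσ := Equiv.Perm.mem_cycleFactorsFinset_iff.mp hσmem'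
    obtain ⟨c, hcs⟩ := hσ.1.nonempty_support
    have hπc : π c ≠ c := by
      have h1 : σ c = π c := hσ.2 c hcs
      have h2 : σ c ≠ c := Equiv.Perm.mem_support.mp hcs
      rw [← h1]
      exact h2
    have hσcyc : σ = π.cycleOf c := Equiv.Perm.cycle_is_cycleOf hcs hσmem'
    have hordodd : Odd (orderOf (π.cycleOf c)) := by
      simp only [Function.comp] at hσcard
      rw [← hσcyc, hσ.1.orderOf, hσcard]
      exact hmc_odd
    obtain ⟨e, v, einj, ecov, eedge⟩ := walk_of_cycle x y a b π hπ hpair c hπc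
    exact odd_cycle_extract (fun u u' => ∃ i : Fin ℓ, ({x i, y i} : Set ℤ) = {u, u'}) hirr
      (orderOf (π.cycleOf c)) hordodd v (fun j => ⟨e j, eedge j⟩)
end
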